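/- arXiv:1703.00859 — 7 statements merged into one kernel-verified Lean document; each statement's English description precedes it below -/
import Mathlib

section
/- If A is a complex matrix and a is a real number with σ₁(A) ≤ a ≤ |A|₂, where σ₁(A) is the largest singular value, then the trace norm of A satisfies ‖A‖* ≥ √(|A|₂² − a²) + a. -/
open Matrix BigOperators

/-- The (unordered) singular values of a complex matrix `A`: square roots of the
eigenvalues of `Aᴴ * A`. -/
noncomputable def singVals {m n : ℕ} (A : Matrix (Fin m) (Fin n) ℂ) : Fin n → ℝ :=
  fun i => Real.sqrt ((Matrix.isHermitian_conjTranspose_mul_self A).eigenvalues i)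

/-- The trace norm: sum of the singular values. -/
noncomputable def traceNorm {m n : ℕ} (A : Matrix (Fin m) (Fin n) ℂ) : ℝ :=
  ∑ i, singVals A i

/-- The Frobenius norm. -/
noncomputable def frobNorm {m n : ℕ} (A : Matrix (Fin m) (Fin n) ℂ) : ℝ :=
  Real.sqrt (∑ i, ∑ j, ‖A i j‖ ^ 2)

/-- `sigma A k` is the `k`-th largest singular value of `A` (1-indexed), `0` if out of range. -/
noncomputable def sigma {m n : ℕ} (A : Matrix (Fin m) (Fin n) ℂ) (k : ℕ) : ℝ :=
  if h : 1 ≤ k ∧ k ≤ n then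
    singVals A (Tuple.sort (singVals A) ⟨n - k, by omega⟩)
  else 0

/-- Number of entries of `A` equal to `1`. -/
noncomputable def onesCount {a b : ℕ} (A : Matrix (Fin a) (Fin b) ℂ) : ℕ := by
  classical
  exact Finset.card (Finset.univ.filter fun p : Fin a × Fin b => A p.1 p.2 = 1)

/-- Minimum trace norm of an `n × n` (0,1)-matrix with exactly `m` ones. -/
noncomputable def psi (n m : ℕ) : ℝ :=
  sInf {x | ∃ A : Matrix (Fin n) (Fin n) ℂ, (∀ i j, A i j = 0 ∨ A i j = 1) ∧
    onesCount A = m ∧ traceNorm A = x}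


lemma sum_sq_singVals {m n : ℕ} (A : Matrix (Fin m) (Fin n) ℂ) :
    ∑ i, singVals A i ^ 2 = ∑ i, ∑ j, ‖A i j‖ ^ 2 := by
  classical
  have heig := Matrix.eigenvalues_conjTranspose_mul_self_nonneg A
  have h1 : ∀ i, singVals A i ^ 2 = (Matrix.isHermitian_conjTranspose_mul_self A).eigenvalues i :=
    fun i => Real.sq_sqrt (heig i)
  simp_rw [h1]
  set hA := Matrix.isHermitian_conjTranspose_mul_self A
  have hspec := hA.trace_eq_sum_eigenvalues
  have hU : (hA.eigenvectorUnitary : Matrix (Fin n) (Fin n) ℂ) *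
      (star (hA.eigenvectorUnitary : Matrix (Fin n) (Fin n) ℂ)) = 1 :=
    (Matrix.mem_unitaryGroup_iff).mp hA.eigenvectorUnitary.2
  have key : ((∑ i, hA.eigenvalues i : ℝ) : ℂ) = ((∑ i, ∑ j, ‖A i j‖ ^ 2 : ℝ) : ℂ) := by
    push_cast
    have hspec' : (Aᴴ * A).trace = ∑ x, (hA.eigenvalues x : ℂ) := by
      rw [hspec]; exact Finset.sum_congr rfl fun i _ => rfl
    rw [← hspec']
    simp only [Matrix.trace, Matrix.diag, Matrix.mul_apply, Matrix.conjTranspose_apply]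
    rw [Finset.sum_comm]
    refine Finset.sum_congr rfl fun i _ => Finset.sum_congr rfl fun j _ => ?_
    rw [← Complex.ofReal_pow, Complex.sq_norm, Complex.normSq_eq_conj_mul_self, Complex.star_def]
  exact_mod_cast key

lemma le_sigma_one {m n : ℕ} (A : Matrix (Fin m) (Fin n) ℂ) (hn : 1 ≤ n) (i : Fin n) :
    singVals A i ≤ sigma A 1 := by
  have h : (1 ≤ 1 ∧ 1 ≤ n) := ⟨le_refl _, hn⟩
  rw [sigma, dif_pos h]
  have hmono := Tuple.monotone_sort (singVals A)
  have he : singVals A i = (singVals A ∘ Tuple.sort (singVals A))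
      ((Tuple.sort (singVals A)).symm i) := by simp
  rw [he]
  exact hmono (by rw [Fin.le_def]; exact Nat.le_sub_one_of_lt (Fin.is_lt _))

lemma sigma_one_eq {m n : ℕ} (A : Matrix (Fin m) (Fin n) ℂ) (hn : 1 ≤ n) :
    ∃ i₀ : Fin n, sigma A 1 = singVals A i₀ := by
  rw [sigma, dif_pos ⟨le_refl 1, hn⟩]
  exact ⟨_, rfl⟩

theorem stmt1 {m n : ℕ} (A : Matrix (Fin m) (Fin n) ℂ) (a : ℝ)
    (h1 : sigma A 1 ≤ a) (h2 : a ≤ frobNorm A) :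
    Real.sqrt (frobNorm A ^ 2 - a ^ 2) + a ≤ traceNorm A := by
  classical
  have hFnn : 0 ≤ frobNorm A := Real.sqrt_nonneg _
  by_cases hn : n = 0
  · subst hn
    have hF : frobNorm A = 0 := by simp [frobNorm]
    have hs : sigma A 1 = 0 := by rw [sigma, dif_neg (by omega)]
    have ha : a = 0 := le_antisymm (hF ▸ h2) (hs ▸ h1)
    simp [traceNorm, ha, hF]
  · have hn1 : 1 ≤ n := Nat.one_le_iff_ne_zero.mpr hn
    set s := singVals A with hsdef
    set S := traceNorm A with hSdef
    have hsnn : ∀ i, 0 ≤ s i := fun i => Real.sqrt_nonneg _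
    set Q := frobNorm A ^ 2 with hQdef
    have h0 : (0:ℝ) ≤ ∑ i, ∑ j, ‖A i j‖ ^ 2 :=
      Finset.sum_nonneg fun i _ => Finset.sum_nonneg fun j _ => sq_nonneg _
    have hQ : ∑ i, s i ^ 2 = Q := by
      rw [hQdef, frobNorm, Real.sq_sqrt h0]
      exact sum_sq_singVals A
    have haQ : a ^ 2 ≤ Q := by
      rw [hQdef]
      have ha0 : 0 ≤ a := le_trans (le_trans (hsnn ⟨0, hn1⟩) (le_sigma_one A hn1 ⟨0, hn1⟩)) h1
      nlinarith
    set r := Real.sqrt (Q - a ^ 2) with hrdef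
    have hrnn : 0 ≤ r := Real.sqrt_nonneg _
    have hr2 : r ^ 2 = Q - a ^ 2 := Real.sq_sqrt (by linarith)
    show r + a ≤ S
    set t := sigma A 1 with htdef
    have hmax : ∀ i, s i ≤ t := le_sigma_one A hn1
    have ht0 : 0 ≤ t := le_trans (hsnn ⟨0, hn1⟩) (hmax ⟨0, hn1⟩)
    have ha0 : 0 ≤ a := le_trans ht0 h1
    have hSnn : 0 ≤ S := Finset.sum_nonneg fun i _ => hsnn i
    have hQle : Q ≤ t * S := by
      rw [← hQ, hSdef, traceNorm, Finset.mul_sum]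
      exact Finset.sum_le_sum fun i _ => by nlinarith [hmax i, hsnn i]
    by_cases hcase : r ≤ t
    · -- geometric case
      obtain ⟨i₀, hi₀⟩ := sigma_one_eq A hn1
      rw [← htdef, ← hsdef] at hi₀
      set T := ∑ j ∈ Finset.univ.erase i₀, s j with hTdef
      have hsplit : s i₀ + T = S := by
        rw [hSdef, traceNorm, hTdef]
        exact Finset.add_sum_erase _ _ (Finset.mem_univ _)
      have hTnn : 0 ≤ T := Finset.sum_nonneg fun i _ => hsnn i
      have hTsq : Q - s i₀ ^ 2 ≤ T ^ 2 := by
        have h' : ∑ j ∈ Finset.univ.erase i₀, s j ^ 2 ≤ T ^ 2 :=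
          Finset.sum_sq_le_sq_sum_of_nonneg fun i _ => hsnn i
        have h'' : s i₀ ^ 2 + ∑ j ∈ Finset.univ.erase i₀, s j ^ 2 = ∑ j, s j ^ 2 :=
          Finset.add_sum_erase _ (fun j => s j ^ 2) (Finset.mem_univ i₀)
        rw [← hQ]
        linarith
      have hta : s i₀ ≤ a := hi₀ ▸ h1
      have hrt : r ≤ s i₀ := hi₀ ▸ hcase
      have key : r + a - s i₀ ≤ T := by
        nlinarith [sq_nonneg (T - (r + a - s i₀)), sq_nonneg (T + (r + a - s i₀))]
      linarith
    · push_neg at hcase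
      nlinarith [mul_nonneg ha0 (sub_nonneg.mpr h1), mul_nonneg hrnn (le_of_lt (sub_pos.mpr hcase)),
        mul_nonneg ht0 hSnn, sq_nonneg (a - r), sq_nonneg (a + r)]
end

section
/- If A is a complex matrix with singular values σ₁ ≥ σ₂ ≥ … ≥ σ_n, then (‖A‖* − σ₁)·σ₂ ≥ |A|₂² − σ₁², and consequently ‖A‖* ≥ σ₁ + √(|A|₂² − σ₁²). -/
open Matrix BigOperators

/-! Since |A|₂² = Re tr(AᴴA) is the sum of the squared singular values, removing σ₁ turns
‖A‖* − σ₁ and |A|₂² − σ₁² into the sum and the sum of squares of σ₂, …, σₙ. Each of these is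
at most σ₂, which gives the first inequality; the second is ∑ σᵢ² ≤ (∑ σᵢ)² for nonnegative σᵢ. -/

lemma Matrix.re_trace_conjTranspose_mul_self {m n : Type*} [Fintype m] [Fintype n]
    (A : Matrix m n ℂ) : (Aᴴ * A).trace.re = ∑ i, ∑ j, ‖A i j‖ ^ 2 := by
  simp only [Matrix.trace, Matrix.diag_apply, Matrix.mul_apply, Matrix.conjTranspose_apply,
    Complex.re_sum, RCLike.star_def, ← Complex.normSq_eq_conj_mul_self, Complex.ofReal_re,
    Complex.sq_norm]
  exact Finset.sum_comm

lemma singVals_nonneg {m n : ℕ} (A : Matrix (Fin m) (Fin n) ℂ) (i : Fin n) : 0 ≤ singVals A i :=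
  Real.sqrt_nonneg _

lemma frobNorm_sq_eq_sum_singVals_sq {m n : ℕ} (A : Matrix (Fin m) (Fin n) ℂ) :
    frobNorm A ^ 2 = ∑ i, singVals A i ^ 2 := by
  have hA := Matrix.isHermitian_conjTranspose_mul_self A
  rw [frobNorm, Real.sq_sqrt (by positivity), ← A.re_trace_conjTranspose_mul_self,
    hA.trace_eq_sum_eigenvalues, Complex.re_sum]
  refine Finset.sum_congr rfl fun i _ => ?_
  rw [singVals, Real.sq_sqrt (Matrix.eigenvalues_conjTranspose_mul_self_nonneg A i)]
  rfl

lemma Finset.sum_sq_le_sum_mul_of_le {ι : Type*} {s : Finset ι} {f : ι → ℝ} {c : ℝ}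
    (hf₀ : ∀ i ∈ s, 0 ≤ f i) (hfc : ∀ i ∈ s, f i ≤ c) :
    ∑ i ∈ s, f i ^ 2 ≤ (∑ i ∈ s, f i) * c := by
  rw [Finset.sum_mul]
  exact Finset.sum_le_sum fun i hi => by
    rw [sq]; exact mul_le_mul_of_nonneg_left (hfc i hi) (hf₀ i hi)

/-- The singular values in increasing order (`sigma` counts from the largest). -/
noncomputable def sortedSingVals {m n : ℕ} (A : Matrix (Fin m) (Fin n) ℂ) : Fin n → ℝ :=
  singVals A ∘ Tuple.sort (singVals A)

section sortedSingVals

variable {m n : ℕ} (A : Matrix (Fin m) (Fin n) ℂ)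

lemma sortedSingVals_nonneg (i : Fin n) : 0 ≤ sortedSingVals A i :=
  singVals_nonneg A _

lemma monotone_sortedSingVals : Monotone (sortedSingVals A) :=
  Tuple.monotone_sort _

lemma sum_comp_sortedSingVals (φ : ℝ → ℝ) :
    ∑ i, φ (sortedSingVals A i) = ∑ i, φ (singVals A i) :=
  Equiv.sum_comp (Tuple.sort (singVals A)) (φ ∘ singVals A)

lemma traceNorm_eq_sum_sortedSingVals : traceNorm A = ∑ i, sortedSingVals A i :=
  (sum_comp_sortedSingVals A id).symm

lemma frobNorm_sq_eq_sum_sortedSingVals_sq :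
    frobNorm A ^ 2 = ∑ i, sortedSingVals A i ^ 2 := by
  rw [frobNorm_sq_eq_sum_singVals_sq, sum_comp_sortedSingVals A (· ^ 2)]

lemma sigma_eq_sortedSingVals {k : ℕ} (hk : 1 ≤ k) (hkn : k ≤ n) :
    sigma A k = sortedSingVals A ⟨n - k, by omega⟩ := by
  rw [sigma, dif_pos ⟨hk, hkn⟩]
  rfl

lemma sortedSingVals_le_sigma {k : ℕ} (i : Fin n) (hk : 1 ≤ k) (hik : i + k ≤ n) :
    sortedSingVals A i ≤ sigma A k := by
  rw [sigma_eq_sortedSingVals A hk (by omega)]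
  exact monotone_sortedSingVals A (Fin.mk_le_mk.mpr (by omega))

end sortedSingVals

theorem stmt2 {m n : ℕ} (A : Matrix (Fin m) (Fin n) ℂ) :
    (traceNorm A - sigma A 1) * sigma A 2 ≥ frobNorm A ^ 2 - sigma A 1 ^ 2 ∧
    traceNorm A ≥ sigma A 1 + Real.sqrt (frobNorm A ^ 2 - sigma A 1 ^ 2) := by
  obtain _ | k := n
  · simp [traceNorm, frobNorm, sigma]
  set g := sortedSingVals A
  have hσ₁ : sigma A 1 = g (Fin.last k) := sigma_eq_sortedSingVals A le_rfl (by omega)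
  have hT : traceNorm A - sigma A 1 = ∑ i : Fin k, g i.castSucc := by
    rw [traceNorm_eq_sum_sortedSingVals, Fin.sum_univ_castSucc, hσ₁, add_sub_cancel_right]
  have hF : frobNorm A ^ 2 - sigma A 1 ^ 2 = ∑ i : Fin k, g i.castSucc ^ 2 := by
    rw [frobNorm_sq_eq_sum_sortedSingVals_sq, Fin.sum_univ_castSucc, hσ₁, add_sub_cancel_right]
  have hg₀ : ∀ i ∈ Finset.univ, 0 ≤ g (Fin.castSucc i) := fun i _ => sortedSingVals_nonneg A _
  refine ⟨?_, ?_⟩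
  · rw [hT, hF]
    exact Finset.sum_sq_le_sum_mul_of_le hg₀ fun i _ =>
      sortedSingVals_le_sigma A _ (by norm_num) (by simp only [Fin.val_castSucc]; omega)
  · have : Real.sqrt (frobNorm A ^ 2 - sigma A 1 ^ 2) ≤ traceNorm A - sigma A 1 := by
      rw [hT, hF]
      exact Real.sqrt_le_iff.mpr ⟨Finset.sum_nonneg hg₀, Finset.sum_sq_le_sq_sum_of_nonneg hg₀⟩
    linarith
end

section
/- Let A be the (0,1) block matrix with blocks J_{s,p}, J_{s,r} in the first block row and J_{q−s,p}, 0_{q−s,r} in the second block row, where J denotes an all-ones matrix and 0 an all-zeros matrix (with 1 ≤ s ≤ q and p, r ≥ 1). Then the trace norm of A equals √(rs + pq + 2√(p·r·s·(q−s))). -/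
open Matrix BigOperators

/-! `Aᴴ * A` has rank at most two, so it has at most two nonzero eigenvalues `λ₁, λ₂ ≥ 0` and
`‖A‖* = √λ₁ + √λ₂ = √(λ₁ + λ₂ + 2 √(λ₁ λ₂))`. Both symmetric functions are read off from traces:
`λ₁ + λ₂ = tr (Aᴴ A)` and `2 λ₁ λ₂ = (tr (Aᴴ A))² - tr ((Aᴴ A)²)`. For the block matrix,
`(Aᴴ A)ᵢⱼ` is `q` when both `i, j < p` and `s` otherwise, which gives `λ₁ + λ₂ = rs + pq` and
`λ₁ λ₂ = prs(q - s)`. -/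

open Finset

lemma sum_sqrt_eq_of_card_le_two {ι : Type*} (S : Finset ι) (f : ι → ℝ) (hf : ∀ i ∈ S, 0 ≤ f i)
    (hS : #S ≤ 2) {T D : ℝ} (h1 : ∑ i ∈ S, f i = T) (h2 : ∑ i ∈ S, f i ^ 2 = T ^ 2 - 2 * D) :
    ∑ i ∈ S, √(f i) = √(T + 2 * √D) := by
  classical
  interval_cases hcard : #S
  · obtain rfl := card_eq_zero.mp hcard
    simp only [sum_empty] at h1 h2 ⊢
    obtain rfl : D = 0 := by subst h1; linarith
    simp [← h1]
  · obtain ⟨a, rfl⟩ := card_eq_one.mp hcard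
    simp only [sum_singleton] at h1 h2 ⊢
    obtain rfl : D = 0 := by subst h1; linarith
    simp [h1]
  · obtain ⟨a, b, hab, rfl⟩ := card_eq_two.mp hcard
    rw [sum_pair hab] at h1 h2 ⊢
    have ha := hf a (by simp)
    have hb := hf b (by simp)
    have hprod : √(f a) * √(f b) = √D := by
      rw [← Real.sqrt_mul ha]
      congr 1
      nlinarith
    have hsq : T + 2 * √D = (√(f a) + √(f b)) ^ 2 := by
      rw [add_sq, Real.sq_sqrt ha, Real.sq_sqrt hb, mul_assoc, hprod, ← h1]
      ring
    rw [hsq, Real.sqrt_sq (by positivity)]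

lemma sum_sqrt_eq_of_card_support_le_two {ι : Type*} [Fintype ι] (f : ι → ℝ)
    (hf : ∀ i, 0 ≤ f i) (hsupp : #{i | f i ≠ 0} ≤ 2) {T D : ℝ} (h1 : ∑ i, f i = T)
    (h2 : ∑ i, f i ^ 2 = T ^ 2 - 2 * D) :
    ∑ i, √(f i) = √(T + 2 * √D) := by
  have restrict : ∀ g : ℝ → ℝ, g 0 = 0 → ∑ i with f i ≠ 0, g (f i) = ∑ i, g (f i) := fun g hg ↦
    sum_subset (subset_univ _) fun i _ hi ↦ by simp_all
  rw [← restrict _ Real.sqrt_zero]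
  exact sum_sqrt_eq_of_card_le_two _ f (fun i _ ↦ hf i) hsupp
    (by rwa [sum_filter_ne_zero]) (by rwa [restrict (· ^ 2) (zero_pow two_ne_zero)])

lemma Matrix.IsHermitian.trace_mul_self {𝕜 n : Type*} [RCLike 𝕜] [Fintype n] [DecidableEq n]
    {M : Matrix n n 𝕜} (hM : M.IsHermitian) :
    (M * M).trace = ∑ i, (hM.eigenvalues i : 𝕜) ^ 2 := by
  conv_lhs => rw [hM.spectral_theorem, ← map_mul, Unitary.conjStarAlgAut_apply,
    trace_mul_cycle, Unitary.coe_star_mul_self, Matrix.one_mul,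
    diagonal_mul_diagonal, trace_diagonal]
  simp [sq]

open scoped ComplexOrder in
lemma traceNorm_eq_of_rank_le_two {m n : ℕ} (A : Matrix (Fin m) (Fin n) ℂ) (hA : A.rank ≤ 2)
    {T D : ℝ} (hT : (Aᴴ * A).trace = T) (hD : (Aᴴ * A * (Aᴴ * A)).trace = T ^ 2 - 2 * D) :
    traceNorm A = √(T + 2 * √D) := by
  have hM := isHermitian_conjTranspose_mul_self A
  refine sum_sqrt_eq_of_card_support_le_two _ (eigenvalues_conjTranspose_mul_self_nonneg A)
    ?_ ?_ ?_
  · rw [← Fintype.card_subtype, ← hM.rank_eq_card_non_zero_eigs, rank_conjTranspose_mul_self]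
    exact hA
  · exact Complex.ofReal_injective (by push_cast; exact hM.trace_eq_sum_eigenvalues.symm.trans hT)
  · exact Complex.ofReal_injective (by push_cast; exact hM.trace_mul_self.symm.trans hD)

section TwoStep

variable {p q r s : ℕ} {A : Matrix (Fin q) (Fin (p + r)) ℂ}
  (hA : ∀ i j, A i j = if (i : ℕ) < s ∨ (j : ℕ) < p then 1 else 0)
include hA

lemma rank_le_two_of_twoStep : A.rank ≤ 2 := by
  let B : Matrix (Fin q) (Fin 2) ℂ := of fun i t ↦ if ((i : ℕ) < s ↔ t = 0) then 1 else 0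
  let C : Matrix (Fin 2) (Fin (p + r)) ℂ :=
    of fun t j ↦ if t = 0 ∨ (j : ℕ) < p then 1 else 0
  have hBC : A = B * C := by
    ext i j
    by_cases hi : (i : ℕ) < s <;> by_cases hj : (j : ℕ) < p <;>
      simp [B, C, mul_apply, Fin.sum_univ_two, hA, hi, hj]
  calc A.rank = (B * C).rank := by rw [hBC]
    _ ≤ B.rank := rank_mul_le_left B C
    _ ≤ 2 := by simpa using B.rank_le_card_width

lemma conjTranspose_mul_self_of_twoStep (hsq : s ≤ q) :
    Aᴴ * A = of fun i j : Fin (p + r) ↦ if (i : ℕ) < p ∧ (j : ℕ) < p then (q : ℂ) else s := by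
  ext i j
  have hterm : ∀ k : Fin q, star (A k i) * A k j =
      if (k : ℕ) < s ∨ ((i : ℕ) < p ∧ (j : ℕ) < p) then 1 else 0 := fun k ↦ by
    by_cases hk : (k : ℕ) < s <;> by_cases hi : (i : ℕ) < p <;> by_cases hj : (j : ℕ) < p <;>
      simp [hA, hk, hi, hj]
  simp only [mul_apply, conjTranspose_apply, hterm, sum_boole, of_apply]
  split_ifs with hij
  · simp [hij]
  · simp [hij, Fin.card_filter_val_lt, hsq]

lemma trace_conjTranspose_mul_self_of_twoStep (hsq : s ≤ q) :
    (Aᴴ * A).trace = ((r * s + p * q : ℕ) : ℝ) := by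
  rw [conjTranspose_mul_self_of_twoStep hA hsq]
  simp [trace, Fin.sum_univ_add]
  ring

lemma trace_conjTranspose_mul_self_sq_of_twoStep (hsq : s ≤ q) :
    (Aᴴ * A * (Aᴴ * A)).trace =
      ((r * s + p * q : ℕ) : ℝ) ^ 2 - 2 * ((p * r * s * (q - s) : ℕ) : ℝ) := by
  rw [conjTranspose_mul_self_of_twoStep hA hsq]
  simp [trace, mul_apply, Fin.sum_univ_add, Nat.cast_sub hsq]
  ring

end TwoStep

theorem stmt4_general (p q r s : ℕ) (hsq : s ≤ q)
    (A : Matrix (Fin q) (Fin (p + r)) ℂ)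
    (hA : ∀ i j, A i j = if (i : ℕ) < s ∨ (j : ℕ) < p then 1 else 0) :
    traceNorm A =
      Real.sqrt (((r * s + p * q : ℕ) : ℝ) +
        2 * Real.sqrt ((p * r * s * (q - s) : ℕ) : ℝ)) :=
  traceNorm_eq_of_rank_le_two A (rank_le_two_of_twoStep hA)
    (trace_conjTranspose_mul_self_of_twoStep hA hsq)
    (trace_conjTranspose_mul_self_sq_of_twoStep hA hsq)

/-- trace norm of the two-step block matrix. -/
theorem stmt4 (p q r s : ℕ) (hp : 1 ≤ p) (hr : 1 ≤ r) (hs : 1 ≤ s) (hsq : s ≤ q)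
    (A : Matrix (Fin q) (Fin (p + r)) ℂ)
    (hA : ∀ i j, A i j = if (i : ℕ) < s ∨ (j : ℕ) < p then 1 else 0) :
    traceNorm A =
      Real.sqrt (((r * s + p * q : ℕ) : ℝ) +
        2 * Real.sqrt ((p * r * s * (q - s) : ℕ) : ℝ)) :=
  stmt4_general p q r s hsq A hA
end

section
/- Let A be the block matrix with blocks J_{s,p}, J_{s,r} in the first block row and J_{q−s,p}, 0_{q−s,r} in the second block row. Then the second largest singular value of A satisfies σ₂(A)² = (pq + rs − √((pq+rs)² − 4(q−s)prs))/2, and A has at most two nonzero singular values. -/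
set_option maxHeartbeats 1000000


open Matrix BigOperators

private lemma cardLt' {N t : ℕ} (ht : t ≤ N) :
    (Finset.univ.filter fun i : Fin N => (i : ℕ) < t).card = t := by
  rw [← Finset.card_range t]
  apply Finset.card_bij (fun (i : Fin N) _ => (i : ℕ))
  · intro i hi; simp only [Finset.mem_filter] at hi; simpa using hi.2
  · intro i _ j _ h; exact Fin.val_injective h
  · intro b hb
    simp only [Finset.mem_range] at hb
    exact ⟨⟨b, lt_of_lt_of_le hb ht⟩, by simp [hb], rfl⟩

private lemma sum_ite_lt' {R : Type*} [NonAssocSemiring R] {N t : ℕ} (ht : t ≤ N) (c : R) :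
    (∑ i : Fin N, if (i : ℕ) < t then c else 0) = (t : R) * c := by
  classical
  rw [Finset.sum_ite, Finset.sum_const_zero, add_zero, Finset.sum_const, cardLt' ht, nsmul_eq_mul]

private lemma sum_ite_ge' {R : Type*} [NonAssocSemiring R] {N t : ℕ} (ht : t ≤ N) (c : R) :
    (∑ i : Fin N, if (i : ℕ) < t then 0 else c) = ((N - t : ℕ) : R) * c := by
  classical
  have h : ∀ i : Fin N, (if (i : ℕ) < t then (0 : R) else c)
      = (if ¬ (i : ℕ) < t then c else 0) := by
    intro i; by_cases h : (i : ℕ) < t <;> simp [h]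
  rw [Finset.sum_congr rfl (fun i _ => h i), Finset.sum_ite, Finset.sum_const_zero, add_zero,
    Finset.sum_const, nsmul_eq_mul]
  congr 2
  have h2 := Finset.card_filter_add_card_filter_not
    (s := (Finset.univ : Finset (Fin N))) (p := fun i : Fin N => (i : ℕ) < t)
  rw [cardLt' ht] at h2
  simp only [Finset.card_univ, Fintype.card_fin] at h2
  omega

private lemma sum_ite_both' {R : Type*} [NonAssocSemiring R] {N t : ℕ} (ht : t ≤ N) (c d : R) :
    (∑ i : Fin N, if (i : ℕ) < t then c else d) = (t : R) * c + ((N - t : ℕ) : R) * d := by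
  have h : ∀ i : Fin N, (if (i:ℕ) < t then c else d)
      = (if (i:ℕ) < t then c else 0) + (if (i:ℕ) < t then 0 else d) := by
    intro i; split <;> simp
  rw [Finset.sum_congr rfl fun i _ => h i, Finset.sum_add_distrib, sum_ite_lt' ht, sum_ite_ge' ht]

private lemma card_filter_comp_perm' {N : ℕ} (e : Equiv.Perm (Fin N)) (P : Fin N → Prop)
    [DecidablePred P] :
    (Finset.univ.filter fun j => P (e j)).card = (Finset.univ.filter P).card := by
  apply Finset.card_bij (fun j _ => e j)
  · intro a ha; simp only [Finset.mem_filter, Finset.mem_univ, true_and] at ha ⊢; exact ha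
  · intro a _ b _ h; exact e.injective h
  · intro b hb
    simp only [Finset.mem_filter, Finset.mem_univ, true_and] at hb
    exact ⟨e.symm b, by simp [hb], by simp⟩

private lemma monotone_eq_zero' {N : ℕ} {g : Fin N → ℝ} (hm : Monotone g) (h0 : ∀ j, 0 ≤ g j)
    {t : ℕ} [DecidablePred fun j : Fin N => g j ≠ 0]
    (hcard : (Finset.univ.filter fun j => g j ≠ 0).card ≤ t)
    (j : Fin N) (hj : (j : ℕ) + t < N) : g j = 0 := by
  by_contra h
  have hpos : 0 < g j := lt_of_le_of_ne (h0 j) (Ne.symm h)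
  have hsub : Finset.Ici j ⊆ Finset.univ.filter fun j' => g j' ≠ 0 := by
    intro j' hj'
    rw [Finset.mem_Ici] at hj'
    simp only [Finset.mem_filter, Finset.mem_univ, true_and]
    exact ne_of_gt (lt_of_lt_of_le hpos (hm hj'))
  have h2 := Finset.card_le_card hsub
  rw [Fin.card_Ici] at h2
  omega

/-- second singular value of the two-step block matrix, which has
at most two nonzero singular values. -/
theorem stmt5 (p q r s : ℕ) (hp : 1 ≤ p) (hr : 1 ≤ r) (hs : 1 ≤ s) (hsq : s ≤ q)
    (A : Matrix (Fin q) (Fin (p + r)) ℂ)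
    (hA : ∀ i j, A i j = if (i : ℕ) < s ∨ (j : ℕ) < p then 1 else 0) :
    sigma A 2 ^ 2 =
      (((p * q + r * s : ℕ) : ℝ) -
        Real.sqrt (((p * q + r * s : ℕ) : ℝ) ^ 2 - ((4 * (q - s) * p * r * s : ℕ) : ℝ))) / 2 ∧
    ∀ k : ℕ, 3 ≤ k → sigma A k = 0 := by
  classical
  have hM : (Aᴴ * A).IsHermitian := Matrix.isHermitian_conjTranspose_mul_self A
  set μ : Fin (p+r) → ℝ := hM.eigenvalues with hμdef
  -- entries of Aᴴ * A
  have hMent : ∀ j k : Fin (p+r), (Aᴴ * A) j k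
      = if (j:ℕ) < p ∧ (k:ℕ) < p then (q:ℂ) else (s:ℂ) := by
    intro j k
    have h0 : (Aᴴ * A) j k = ∑ i : Fin q, (starRingEnd ℂ) (A i j) * A i k := by
      simp [Matrix.mul_apply, Matrix.conjTranspose_apply]
    rw [h0]
    by_cases hj : (j:ℕ) < p <;> by_cases hk : (k:ℕ) < p <;>
      simp only [hA, hj, hk, or_true, or_false, if_true, if_false, and_true, and_false,
        true_and, false_and, if_pos, apply_ite (starRingEnd ℂ), RingHom.map_one, RingHom.map_zero,
        one_mul, mul_one, ite_mul, mul_ite, mul_zero, zero_mul, ite_self]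
    · simp [Finset.sum_const]
    · rw [sum_ite_lt' hsq (1:ℂ)]; simp [hk]
    · rw [sum_ite_lt' hsq (1:ℂ)]; simp [hj]
    · rw [show (∑ i : Fin q, if (i:ℕ) < s then if (i:ℕ) < s then (1:ℂ) else 0 else 0)
          = ∑ i : Fin q, if (i:ℕ) < s then (1:ℂ) else 0 from
        Finset.sum_congr rfl fun i _ => by by_cases h : (i:ℕ) < s <;> simp [h]]
      rw [sum_ite_lt' hsq (1:ℂ)]; simp [hj, hk]
  -- every eigenvalue satisfies the cubic
  have hquad : ∀ i : Fin (p+r), μ i = 0 ∨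
      μ i ^ 2 - ((p:ℝ)*q + r*s) * μ i + (p:ℝ)*r*s*((q:ℝ)-s) = 0 := by
    intro i
    set v : Fin (p+r) → ℂ := ⇑(hM.eigenvectorBasis i) with hvdef
    have hv0 : v ≠ 0 := by
      intro h
      exact hM.eigenvectorBasis.orthonormal.ne_zero i (by ext jj; exact congrFun h jj)
    have heig : (Aᴴ * A) *ᵥ v = (μ i : ℝ) • v := hM.mulVec_eigenvectorBasis i
    set Sp : ℂ := ∑ k : Fin (p+r), if (k:ℕ) < p then v k else 0 with hSp
    set Sr : ℂ := ∑ k : Fin (p+r), if (k:ℕ) < p then 0 else v k with hSr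
    have hent : ∀ j : Fin (p+r), (μ i : ℂ) * v j =
        if (j:ℕ) < p then (q:ℂ) * Sp + (s:ℂ) * Sr else (s:ℂ) * Sp + (s:ℂ) * Sr := by
      intro j
      have h1 : ((Aᴴ * A) *ᵥ v) j = (μ i : ℝ) • v j := congrFun heig j
      have h2 : ((Aᴴ * A) *ᵥ v) j = ∑ k, (Aᴴ * A) j k * v k := rfl
      have h3 : (μ i : ℝ) • v j = (μ i : ℂ) * v j := by
        simp [Complex.real_smul]
      rw [← h3, ← h1, h2]
      by_cases hj : (j:ℕ) < p
      · rw [if_pos hj]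
        calc ∑ k, (Aᴴ * A) j k * v k
            = ∑ k : Fin (p+r), ((q:ℂ) * (if (k:ℕ) < p then v k else 0)
              + (s:ℂ) * (if (k:ℕ) < p then 0 else v k)) := by
              refine Finset.sum_congr rfl fun k _ => ?_
              rw [hMent j k]
              by_cases hk : (k:ℕ) < p <;> simp [hj, hk]
          _ = (q:ℂ) * Sp + (s:ℂ) * Sr := by
              rw [Finset.sum_add_distrib, ← Finset.mul_sum, ← Finset.mul_sum]
      · rw [if_neg hj]
        calc ∑ k, (Aᴴ * A) j k * v k
            = ∑ k : Fin (p+r), ((s:ℂ) * (if (k:ℕ) < p then v k else 0)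
              + (s:ℂ) * (if (k:ℕ) < p then 0 else v k)) := by
              refine Finset.sum_congr rfl fun k _ => ?_
              rw [hMent j k]
              by_cases hk : (k:ℕ) < p <;> simp [hj, hk]
          _ = (s:ℂ) * Sp + (s:ℂ) * Sr := by
              rw [Finset.sum_add_distrib, ← Finset.mul_sum, ← Finset.mul_sum]
    have e1 : (μ i : ℂ) * Sp = (p:ℂ) * ((q:ℂ) * Sp + (s:ℂ) * Sr) := by
      calc (μ i : ℂ) * Sp = ∑ j : Fin (p+r), (if (j:ℕ) < p then (μ i : ℂ) * v j else 0) := by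
            rw [hSp, Finset.mul_sum]
            exact Finset.sum_congr rfl fun j _ => by by_cases hj : (j:ℕ) < p <;> simp [hj]
        _ = ∑ j : Fin (p+r), (if (j:ℕ) < p then (q:ℂ) * Sp + (s:ℂ) * Sr else 0) := by
            refine Finset.sum_congr rfl fun j _ => ?_
            by_cases hj : (j:ℕ) < p <;> simp only [hj, if_true, if_false]
            rw [hent j, if_pos hj]
        _ = (p:ℂ) * ((q:ℂ) * Sp + (s:ℂ) * Sr) := sum_ite_lt' (by omega) _
    have e2 : (μ i : ℂ) * Sr = (r:ℂ) * ((s:ℂ) * Sp + (s:ℂ) * Sr) := by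
      calc (μ i : ℂ) * Sr = ∑ j : Fin (p+r), (if (j:ℕ) < p then 0 else (μ i : ℂ) * v j) := by
            rw [hSr, Finset.mul_sum]
            exact Finset.sum_congr rfl fun j _ => by by_cases hj : (j:ℕ) < p <;> simp [hj]
        _ = ∑ j : Fin (p+r), (if (j:ℕ) < p then 0 else (s:ℂ) * Sp + (s:ℂ) * Sr) := by
            refine Finset.sum_congr rfl fun j _ => ?_
            by_cases hj : (j:ℕ) < p <;> simp only [hj, if_true, if_false]
            rw [hent j, if_neg hj]
        _ = (r:ℂ) * ((s:ℂ) * Sp + (s:ℂ) * Sr) := by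
            rw [sum_ite_ge' (by omega) _]
            congr 2
            omega
    by_cases hS : Sp = 0 ∧ Sr = 0
    · left
      obtain ⟨j, hj⟩ := Function.ne_iff.mp hv0
      have h := hent j
      rw [hS.1, hS.2] at h
      simp only [mul_zero, add_zero, zero_add, ite_self] at h
      rcases mul_eq_zero.mp h with h' | h'
      · exact_mod_cast h'
      · exact absurd h' hj
    · right
      have hp0 : (p:ℂ) ≠ 0 := Nat.cast_ne_zero.mpr (by omega)
      have hr0 : (r:ℂ) ≠ 0 := Nat.cast_ne_zero.mpr (by omega)
      have hs0 : (s:ℂ) ≠ 0 := Nat.cast_ne_zero.mpr (by omega)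
      have hSp0 : Sp ≠ 0 := by
        intro h
        apply hS
        refine ⟨h, ?_⟩
        rw [h] at e1
        simp only [mul_zero, zero_add] at e1
        rcases mul_eq_zero.mp e1.symm with h' | h'
        · exact absurd h' hp0
        · rcases mul_eq_zero.mp h' with h'' | h''
          · exact absurd h'' hs0
          · exact h''
      have hSr0 : Sr ≠ 0 := by
        intro h
        apply hS
        rw [h] at e2
        simp only [mul_zero, add_zero] at e2
        rcases mul_eq_zero.mp e2.symm with h' | h'
        · exact absurd h' hr0
        · rcases mul_eq_zero.mp h' with h'' | h''
          · exact absurd h'' hs0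
          · exact ⟨h'', h⟩
      have key : (((μ i:ℂ))^2 - ((p:ℂ)*q + r*s)*(μ i:ℂ) + (p:ℂ)*r*s*((q:ℂ)-s)) * (Sp*Sr) = 0 := by
        linear_combination (((μ i:ℂ)) - (r:ℂ)*s) * Sr * e1 + (p:ℂ)*s*Sr * e2
      rcases mul_eq_zero.mp key with h | h
      · have : (((μ i ^ 2 - ((p:ℝ)*q + r*s) * μ i + (p:ℝ)*r*s*((q:ℝ)-s)) : ℝ) : ℂ) = 0 := by
          push_cast
          linear_combination h
        exact_mod_cast this
      · rcases mul_eq_zero.mp h with h' | h'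
        · exact absurd h' hSp0
        · exact absurd h' hSr0
  -- trace identities
  set U : Matrix (Fin (p+r)) (Fin (p+r)) ℂ := ↑hM.eigenvectorUnitary with hUdef
  set D : Matrix (Fin (p+r)) (Fin (p+r)) ℂ := Matrix.diagonal (RCLike.ofReal ∘ μ) with hDdef
  have hspec : Aᴴ * A = U * D * star U := hM.spectral_theorem
  have hUU : star U * U = 1 := by
    rw [hUdef]
    exact Unitary.coe_star_mul_self hM.eigenvectorUnitary
  have htrD : Matrix.trace D = ∑ i, (μ i : ℂ) := by
    rw [hDdef, Matrix.trace_diagonal]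
    rfl
  have htr1 : ∑ i, (μ i : ℂ) = Matrix.trace (Aᴴ * A) := by
    rw [hspec, Matrix.trace_mul_comm, ← Matrix.mul_assoc, hUU, Matrix.one_mul, htrD]
  have htrDD : Matrix.trace (D * D) = ∑ i, (μ i : ℂ)^2 := by
    rw [hDdef, Matrix.diagonal_mul_diagonal, Matrix.trace_diagonal]
    refine Finset.sum_congr rfl fun i _ => ?_
    simp [sq]
  have htr2 : ∑ i, (μ i : ℂ)^2 = Matrix.trace ((Aᴴ * A) * (Aᴴ * A)) := by
    rw [← htrDD]
    conv_rhs => rw [hspec]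
    rw [show (U * D * star U) * (U * D * star U) = (U * D) * ((star U * U) * (D * star U)) by
      simp only [Matrix.mul_assoc]]
    rw [hUU, Matrix.one_mul, Matrix.trace_mul_comm (U * D) (D * star U)]
    rw [show (D * star U) * (U * D) = D * ((star U * U) * D) by simp only [Matrix.mul_assoc]]
    rw [hUU, Matrix.one_mul]
  have htrM : Matrix.trace (Aᴴ * A) = ((p*q + r*s : ℕ) : ℂ) := by
    rw [Matrix.trace]
    calc ∑ j, (Aᴴ * A).diag j
        = ∑ j : Fin (p+r), (if (j:ℕ) < p then (q:ℂ) else (s:ℂ)) := by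
          refine Finset.sum_congr rfl fun j _ => ?_
          rw [Matrix.diag_apply, hMent j j]
          by_cases hj : (j:ℕ) < p <;> simp [hj]
      _ = ((p*q + r*s : ℕ) : ℂ) := by
          rw [sum_ite_both' (by omega : p ≤ p + r) _ _, show p + r - p = r by omega]
          push_cast
          ring
  have htrMM : Matrix.trace ((Aᴴ * A) * (Aᴴ * A))
      = ((p*p*q*q + (2*p*r + r*r)*s*s : ℕ) : ℂ) := by
    rw [Matrix.trace]
    calc ∑ j, ((Aᴴ * A) * (Aᴴ * A)).diag j
        = ∑ j : Fin (p+r), ∑ k : Fin (p+r),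
            (if (j:ℕ) < p ∧ (k:ℕ) < p then ((q:ℂ)*q) else ((s:ℂ)*s)) := by
          refine Finset.sum_congr rfl fun j _ => ?_
          rw [Matrix.diag_apply, Matrix.mul_apply]
          refine Finset.sum_congr rfl fun k _ => ?_
          rw [hMent j k, hMent k j]
          by_cases hj : (j:ℕ) < p <;> by_cases hk : (k:ℕ) < p <;> simp [hj, hk]
      _ = ∑ j : Fin (p+r), (if (j:ℕ) < p
            then ((p:ℂ)*((q:ℂ)*q) + (r:ℂ)*((s:ℂ)*s)) else (((p:ℂ)+r)*((s:ℂ)*s))) := by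
          refine Finset.sum_congr rfl fun j _ => ?_
          by_cases hj : (j:ℕ) < p
          · rw [if_pos hj]
            calc ∑ k : Fin (p+r), (if (j:ℕ) < p ∧ (k:ℕ) < p then ((q:ℂ)*q) else ((s:ℂ)*s))
                = ∑ k : Fin (p+r), (if (k:ℕ) < p then ((q:ℂ)*q) else ((s:ℂ)*s)) := by
                  refine Finset.sum_congr rfl fun k _ => ?_
                  by_cases hk : (k:ℕ) < p <;> simp [hj, hk]
              _ = (p:ℂ)*((q:ℂ)*q) + (r:ℂ)*((s:ℂ)*s) := by
                  rw [sum_ite_both' (by omega : p ≤ p + r) _ _, show p + r - p = r by omega]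
          · rw [if_neg hj]
            calc ∑ k : Fin (p+r), (if (j:ℕ) < p ∧ (k:ℕ) < p then ((q:ℂ)*q) else ((s:ℂ)*s))
                = ∑ _k : Fin (p+r), ((s:ℂ)*s) := by
                  refine Finset.sum_congr rfl fun k _ => ?_
                  simp [hj]
              _ = ((p:ℂ)+r)*((s:ℂ)*s) := by
                  rw [Finset.sum_const, Finset.card_univ, Fintype.card_fin, nsmul_eq_mul]
                  push_cast; ring
      _ = ((p*p*q*q + (2*p*r + r*r)*s*s : ℕ) : ℂ) := by
          rw [sum_ite_both' (by omega : p ≤ p + r) _ _, show p + r - p = r by omega]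
          push_cast
          ring
  -- real sums
  have hsum1 : ∑ i, μ i = (p:ℝ)*q + (r:ℝ)*s := by
    have h := htr1.trans htrM
    have h2 : ((∑ i, μ i : ℝ) : ℂ) = (((p:ℝ)*q + (r:ℝ)*s : ℝ) : ℂ) := by
      push_cast at h ⊢
      exact h
    exact_mod_cast h2
  have hsum2 : ∑ i, (μ i)^2 = ((p:ℝ)*p*q*q + (2*(p:ℝ)*r + (r:ℝ)*r)*s*s) := by
    have h := htr2.trans htrMM
    have h2 : ((∑ i, (μ i)^2 : ℝ) : ℂ)
        = (((p:ℝ)*p*q*q + (2*(p:ℝ)*r + (r:ℝ)*r)*s*s : ℝ) : ℂ) := by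
      push_cast at h ⊢
      exact h
    exact_mod_cast h2
  -- the two candidate eigenvalues
  set a : ℝ := (p:ℝ)*q + (r:ℝ)*s with ha
  set c : ℝ := (p:ℝ)*r*s*((q:ℝ)-s) with hc
  have hp1 : (1:ℝ) ≤ p := by exact_mod_cast hp
  have hr1 : (1:ℝ) ≤ r := by exact_mod_cast hr
  have hs1 : (1:ℝ) ≤ s := by exact_mod_cast hs
  have hq1 : (1:ℝ) ≤ q := by exact_mod_cast le_trans hs hsq
  have hqs : (s:ℝ) ≤ q := by exact_mod_cast hsq
  have hp0' : (0:ℝ) < p := lt_of_lt_of_le one_pos hp1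
  have hr0' : (0:ℝ) < r := lt_of_lt_of_le one_pos hr1
  have hs0' : (0:ℝ) < s := lt_of_lt_of_le one_pos hs1
  have hc0 : 0 ≤ c := by
    have h := sub_nonneg.mpr hqs
    rw [hc]
    positivity
  have hDpos : 0 < a^2 - 4*c := by
    have hprss : 0 < (p:ℝ)*r*s*s := mul_pos (mul_pos (mul_pos hp0' hr0') hs0') hs0'
    have hkey : a^2 - 4*c = ((p:ℝ)*q - (r:ℝ)*s)^2 + 4*((p:ℝ)*r*s*s) := by rw [ha, hc]; ring
    have hsq := sq_nonneg ((p:ℝ)*q - (r:ℝ)*s)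
    rw [hkey]
    linarith
  set sd : ℝ := Real.sqrt (a^2-4*c) with hsd
  have hsd0 : 0 < sd := Real.sqrt_pos.mpr hDpos
  have hsd2 : sd^2 = a^2-4*c := Real.sq_sqrt hDpos.le
  set l1 : ℝ := (a+sd)/2 with hl1
  set l2 : ℝ := (a-sd)/2 with hl2
  have ha0 : 0 < a := by
    rw [ha]
    have h1 : 0 < (p:ℝ)*q := mul_pos hp0' (lt_of_lt_of_le one_pos hq1)
    have h2 : 0 < (r:ℝ)*s := mul_pos hr0' hs0'
    linarith
  have hsdle : sd ≤ a := by
    rw [hsd]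
    calc Real.sqrt (a^2-4*c) ≤ Real.sqrt (a^2) := Real.sqrt_le_sqrt (by linarith)
      _ = a := Real.sqrt_sq ha0.le
  have hl2nn : 0 ≤ l2 := by rw [hl2]; linarith
  have hl21 : l2 < l1 := by rw [hl1, hl2]; linarith
  have hl1pos : 0 < l1 := by rw [hl1]; linarith
  have hsumll : l1 + l2 = a := by rw [hl1, hl2]; ring
  have hprodll : l1 * l2 = c := by rw [hl1, hl2]; linear_combination (-1/4 : ℝ) * hsd2
  have hμmem : ∀ i, μ i = 0 ∨ μ i = l1 ∨ μ i = l2 := by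
    intro i
    rcases hquad i with h | h
    · exact Or.inl h
    · right
      have hfac : (μ i - l1) * (μ i - l2) = 0 := by
        rw [hl1, hl2]
        linear_combination h + (-1/4 : ℝ) * hsd2
      rcases mul_eq_zero.mp hfac with h' | h'
      · exact Or.inl (sub_eq_zero.mp h')
      · exact Or.inr (sub_eq_zero.mp h')
  have hμnn : ∀ i, 0 ≤ μ i := by
    intro i
    rcases hμmem i with h | h | h <;> rw [h] <;> linarith
  -- split sums by eigenvalue
  set k1 : ℕ := (Finset.univ.filter fun i => μ i = l1).card with hk1def
  set k2 : ℕ := (Finset.univ.filter fun i => μ i = l2).card with hk2def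
  have hsplit : ∀ φ : ℝ → ℝ, φ 0 = 0 →
      ∑ i, φ (μ i) = (k1 : ℝ) * φ l1 + (k2 : ℝ) * φ l2 := by
    intro φ hφ0
    rw [← Finset.sum_filter_add_sum_filter_not Finset.univ (fun i => μ i = l1)
      (fun i => φ (μ i))]
    congr 1
    · rw [Finset.sum_congr rfl (fun i hi => by rw [(Finset.mem_filter.mp hi).2]),
        Finset.sum_const, nsmul_eq_mul, hk1def]
    · rw [← Finset.sum_filter_add_sum_filter_not (Finset.univ.filter fun i => ¬ μ i = l1)
        (fun i => μ i = l2) (fun i => φ (μ i))]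
      have h1 : ((Finset.univ.filter fun i => ¬ μ i = l1).filter (fun i => μ i = l2))
          = Finset.univ.filter fun i => μ i = l2 := by
        ext i
        simp only [Finset.mem_filter, Finset.mem_univ, true_and]
        constructor
        · rintro ⟨_, h⟩; exact h
        · intro h; exact ⟨by rw [h]; exact ne_of_lt hl21, h⟩
      have h2 : ∑ i ∈ (Finset.univ.filter fun i => ¬ μ i = l1).filter (fun i => ¬ μ i = l2),
          φ (μ i) = 0 := by
        apply Finset.sum_eq_zero
        intro i hi
        simp only [Finset.mem_filter, Finset.mem_univ, true_and] at hi
        rcases hμmem i with h | h | h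
        · rw [h, hφ0]
        · exact absurd h hi.1
        · exact absurd h hi.2
      rw [h1, h2, add_zero,
        Finset.sum_congr rfl (fun i hi => by rw [(Finset.mem_filter.mp hi).2]),
        Finset.sum_const, nsmul_eq_mul, hk2def]
  have eq1 : (k1:ℝ) * l1 + (k2:ℝ) * l2 = a := by
    rw [← hsplit (fun x => x) rfl]
    exact hsum1
  have eq2 : (k1:ℝ) * l1^2 + (k2:ℝ) * l2^2 = a^2 - 2*c := by
    rw [← hsplit (fun x => x^2) (by norm_num)]
    rw [show (∑ i, (fun x => x^2) (μ i)) = ∑ i, (μ i)^2 from rfl, hsum2, ha, hc]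
    ring
  -- singular values and sorted tuple
  have hν : ∀ i, singVals A i = Real.sqrt (μ i) := fun i => rfl
  have hνnn : ∀ i, 0 ≤ singVals A i := fun i => Real.sqrt_nonneg _
  have hmono : Monotone (singVals A ∘ ⇑(Tuple.sort (singVals A))) :=
    Tuple.monotone_sort (singVals A)
  have hgnn : ∀ j, 0 ≤ (singVals A ∘ ⇑(Tuple.sort (singVals A))) j :=
    fun j => Real.sqrt_nonneg _
  -- counting: k1 = 1 always; and if s < q then also k2 = 1 with l2 > 0
  have hcount : (k1 = 1 ∧ k2 = 1 ∧ 0 < l2) ∨ (k1 = 1 ∧ l2 = 0) := by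
    rcases lt_or_eq_of_le hqs with hlt | heq
    · -- s < q (real), so c > 0 and l2 > 0
      left
      have hcpos : 0 < c := by
        rw [hc]
        exact mul_pos (mul_pos (mul_pos hp0' hr0') hs0') (sub_pos.mpr hlt)
      have hl2pos : 0 < l2 := by
        rcases hl2nn.lt_or_eq with h | h
        · exact h
        · exfalso; rw [← h] at hprodll; simp at hprodll; linarith
      have e3 : (k1:ℝ) * (l1*(l1-l2)) = 1 * (l1*(l1-l2)) := by
        linear_combination eq2 - l2 * eq1 + (-1/2 : ℝ) * hsd2
      have hx : (k1:ℝ) = 1 :=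
        mul_right_cancel₀ (ne_of_gt (mul_pos hl1pos (sub_pos.mpr hl21))) e3
      have hy : (k2:ℝ) * l2 = 1 * l2 := by
        linear_combination eq1 - l1 * hx - hsumll
      have hy' : (k2:ℝ) = 1 := mul_right_cancel₀ (ne_of_gt hl2pos) hy
      exact ⟨by exact_mod_cast hx, by exact_mod_cast hy', hl2pos⟩
    · -- s = q (real)
      right
      have hczero : c = 0 := by rw [hc, ← heq]; ring
      have hsda : sd = a := by
        rw [hsd, hczero]
        rw [show a^2 - 4*0 = a^2 by ring]
        exact Real.sqrt_sq ha0.le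
      have hl2z : l2 = 0 := by rw [hl2, hsda]; ring
      have hl1a : l1 = a := by rw [hl1, hsda]; ring
      have hx : (k1:ℝ) * a = a := by
        have := eq1
        rw [hl2z, hl1a] at this
        simpa using this
      have : (k1:ℝ) = 1 :=
        mul_right_cancel₀ (ne_of_gt ha0) (by rw [one_mul]; exact hx)
      exact ⟨by exact_mod_cast this, hl2z⟩
  -- support bound
  have hsuppν : (Finset.univ.filter fun i => singVals A i ≠ 0).card ≤ 2 := by
    have hsub : (Finset.univ.filter fun i => singVals A i ≠ 0)
        ⊆ (Finset.univ.filter fun i => μ i = l1) ∪ (Finset.univ.filter fun i => μ i = l2) := by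
      intro i hi
      simp only [Finset.mem_filter, Finset.mem_univ, true_and] at hi
      have hμne : μ i ≠ 0 := by
        intro h
        apply hi
        rw [hν, h, Real.sqrt_zero]
      rcases hμmem i with h | h | h
      · exact absurd h hμne
      · exact Finset.mem_union_left _ (by simp [h])
      · exact Finset.mem_union_right _ (by simp [h])
    have h := Finset.card_le_card hsub
    have h2 := Finset.card_union_le (Finset.univ.filter fun i => μ i = l1)
      (Finset.univ.filter fun i => μ i = l2)
    rcases hcount with ⟨ha1, ha2, _⟩ | ⟨ha1, hl2z⟩
    · omega
    · -- l2 = 0 : the l2-filter is contained in zero-eigenvalue set, but we can still bound by union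
      -- use that filter (μ = l2) ∩ supp is empty: redo subset with only l1
      have hsub2 : (Finset.univ.filter fun i => singVals A i ≠ 0)
          ⊆ (Finset.univ.filter fun i => μ i = l1) := by
        intro i hi
        simp only [Finset.mem_filter, Finset.mem_univ, true_and] at hi ⊢
        have hμne : μ i ≠ 0 := by
          intro h
          apply hi
          rw [hν, h, Real.sqrt_zero]
        rcases hμmem i with h | h | h
        · exact absurd h hμne
        · exact h
        · rw [hl2z] at h; exact absurd h hμne
      have := Finset.card_le_card hsub2
      omega
  have hsuppg : (Finset.univ.filter
      fun j => (singVals A ∘ ⇑(Tuple.sort (singVals A))) j ≠ 0).card ≤ 2 := by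
    rw [show (Finset.univ.filter fun j => (singVals A ∘ ⇑(Tuple.sort (singVals A))) j ≠ 0)
        = Finset.univ.filter fun j => (fun i => singVals A i ≠ 0) (Tuple.sort (singVals A) j)
        from rfl]
    rw [card_filter_comp_perm' (Tuple.sort (singVals A)) (fun i => singVals A i ≠ 0)]
    exact hsuppν
  -- unfold sigma
  have hg : ∀ (k : ℕ) (h1 : 1 ≤ k) (h2 : k ≤ p + r),
      sigma A k = (singVals A ∘ ⇑(Tuple.sort (singVals A))) ⟨p + r - k, by omega⟩ := by
    intro k h1 h2
    rw [sigma, dif_pos ⟨h1, h2⟩]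
    rfl
  constructor
  · -- the second singular value
    have hRHS : (((p * q + r * s : ℕ) : ℝ) -
        Real.sqrt (((p * q + r * s : ℕ) : ℝ) ^ 2 - ((4 * (q - s) * p * r * s : ℕ) : ℝ))) / 2
        = l2 := by
      have h1 : ((p * q + r * s : ℕ) : ℝ) = a := by rw [ha]; push_cast; ring
      have h2 : ((4 * (q - s) * p * r * s : ℕ) : ℝ) = 4 * c := by
        rw [hc]
        push_cast [Nat.cast_sub hsq]
        ring
      rw [h1, h2, hl2, hsd]
    rw [hRHS, hg 2 (by omega) (by omega)]
    rcases hcount with ⟨hk1, hk2, hl2pos⟩ | ⟨hk1, hl2z⟩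
    · -- s < q case: second sorted value is √l2
      set g := singVals A ∘ ⇑(Tuple.sort (singVals A)) with hgdef
      set σp := Tuple.sort (singVals A) with hσp
      obtain ⟨i1, hi1⟩ : ∃ i, μ i = l1 := by
        have : (Finset.univ.filter fun i => μ i = l1).Nonempty := by
          rw [← Finset.card_pos, ← hk1def, hk1]; norm_num
        obtain ⟨i, hi⟩ := this
        exact ⟨i, (Finset.mem_filter.mp hi).2⟩
      obtain ⟨i2, hi2⟩ : ∃ i, μ i = l2 := by
        have : (Finset.univ.filter fun i => μ i = l2).Nonempty := by
          rw [← Finset.card_pos, ← hk2def, hk2]; norm_num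
        obtain ⟨i, hi⟩ := this
        exact ⟨i, (Finset.mem_filter.mp hi).2⟩
      have hgj1 : g (σp.symm i1) = Real.sqrt l1 := by
        simp only [hgdef, Function.comp_apply, Equiv.apply_symm_apply]
        rw [hν, hi1]
      have hgj2 : g (σp.symm i2) = Real.sqrt l2 := by
        simp only [hgdef, Function.comp_apply, Equiv.apply_symm_apply]
        rw [hν, hi2]
      have hsql : Real.sqrt l2 < Real.sqrt l1 := Real.sqrt_lt_sqrt hl2nn hl21
      have hi12 : i1 ≠ i2 := by
        intro h
        rw [h, hi2] at hi1
        exact absurd hi1 (ne_of_lt hl21)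
      have hj12 : σp.symm i1 ≠ σp.symm i2 := fun h => hi12 (σp.symm.injective h)
      have hgmem : ∀ j, g j = 0 ∨ g j = Real.sqrt l1 ∨ g j = Real.sqrt l2 := by
        intro j
        rcases hμmem (σp j) with h | h | h
        · left; simp only [hgdef, Function.comp_apply]; rw [hν, h, Real.sqrt_zero]
        · right; left; simp only [hgdef, Function.comp_apply]; rw [hν, h]
        · right; right; simp only [hgdef, Function.comp_apply]; rw [hν, h]
      -- lower bound for g ⟨p+r-2⟩
      have hlow : Real.sqrt l2 ≤ g ⟨p + r - 2, by omega⟩ := by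
        by_cases hcase : (σp.symm i1 : ℕ) ≤ p + r - 2
        · have : g (σp.symm i1) ≤ g ⟨p + r - 2, by omega⟩ := hmono (by
            rw [Fin.le_def]; exact hcase)
          rw [hgj1] at this
          linarith
        · have hj2le : (σp.symm i2 : ℕ) ≤ p + r - 2 := by
            have h1 := (σp.symm i1).isLt
            have h2 := (σp.symm i2).isLt
            have hne : (σp.symm i1 : ℕ) ≠ (σp.symm i2 : ℕ) := fun h => hj12 (Fin.val_injective h)
            omega
          have : g (σp.symm i2) ≤ g ⟨p + r - 2, by omega⟩ := hmono (by
            rw [Fin.le_def]; exact hj2le)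
          rw [hgj2] at this
          exact this
      -- g ⟨p+r-2⟩ cannot be √l1
      have hcards1 : (Finset.univ.filter fun j => g j = Real.sqrt l1).card = 1 := by
        rw [show (Finset.univ.filter fun j => g j = Real.sqrt l1)
            = Finset.univ.filter fun j => (fun i => singVals A i = Real.sqrt l1) (σp j)
            from rfl]
        rw [card_filter_comp_perm' σp (fun i => singVals A i = Real.sqrt l1)]
        rw [show (Finset.univ.filter fun i => singVals A i = Real.sqrt l1)
            = Finset.univ.filter fun i => μ i = l1 by
          apply Finset.filter_congr
          intro i _
          rw [hν]
          exact Real.sqrt_inj (hμnn i) hl1pos.le]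
        rw [← hk1def]; exact hk1
      have hne1 : g ⟨p + r - 2, by omega⟩ ≠ Real.sqrt l1 := by
        intro hcon
        have htop : g ⟨p + r - 1, by omega⟩ = Real.sqrt l1 := by
          have hup : g ⟨p + r - 2, by omega⟩ ≤ g ⟨p + r - 1, by omega⟩ := hmono (by
            rw [Fin.le_def]; simp; omega)
          rw [hcon] at hup
          rcases hgmem ⟨p + r - 1, by omega⟩ with h | h | h
          · exfalso; rw [h] at hup; linarith [Real.sqrt_pos.mpr hl1pos]
          · exact h
          · exfalso; rw [h] at hup; linarith
        have hpair : ({⟨p + r - 2, by omega⟩, ⟨p + r - 1, by omega⟩} : Finset (Fin (p+r)))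
            ⊆ Finset.univ.filter fun j => g j = Real.sqrt l1 := by
          intro x hx
          simp only [Finset.mem_insert, Finset.mem_singleton] at hx
          rcases hx with h | h <;> subst h <;>
            simp only [Finset.mem_filter, Finset.mem_univ, true_and]
          · exact hcon
          · exact htop
        have hcard2 : ({⟨p + r - 2, by omega⟩, ⟨p + r - 1, by omega⟩}
            : Finset (Fin (p+r))).card = 2 := by
          rw [Finset.card_pair]
          intro h
          have := congrArg Fin.val h
          simp at this
          omega
        have := Finset.card_le_card hpair
        rw [hcard2, hcards1] at this
        omega
      have hfin : g ⟨p + r - 2, by omega⟩ = Real.sqrt l2 := by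
        rcases hgmem ⟨p + r - 2, by omega⟩ with h | h | h
        · exfalso; rw [h] at hlow; linarith [Real.sqrt_pos.mpr hl2pos]
        · exact absurd h hne1
        · exact h
      rw [hfin, Real.sq_sqrt hl2nn]
    · -- s = q case: everything below top is 0, and l2 = 0
      have hsupp1 : (Finset.univ.filter
          fun j => (singVals A ∘ ⇑(Tuple.sort (singVals A))) j ≠ 0).card ≤ 1 := by
        rw [show (Finset.univ.filter fun j => (singVals A ∘ ⇑(Tuple.sort (singVals A))) j ≠ 0)
            = Finset.univ.filter fun j => (fun i => singVals A i ≠ 0)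
              (Tuple.sort (singVals A) j) from rfl]
        rw [card_filter_comp_perm' (Tuple.sort (singVals A)) (fun i => singVals A i ≠ 0)]
        have hsub2 : (Finset.univ.filter fun i => singVals A i ≠ 0)
            ⊆ (Finset.univ.filter fun i => μ i = l1) := by
          intro i hi
          simp only [Finset.mem_filter, Finset.mem_univ, true_and] at hi ⊢
          have hμne : μ i ≠ 0 := by
            intro h
            apply hi
            rw [hν, h, Real.sqrt_zero]
          rcases hμmem i with h | h | h
          · exact absurd h hμne
          · exact h
          · rw [hl2z] at h; exact absurd h hμne
        have := Finset.card_le_card hsub2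
        omega
      have hzero : (singVals A ∘ ⇑(Tuple.sort (singVals A))) ⟨p + r - 2, by omega⟩ = 0 :=
        monotone_eq_zero' hmono hgnn hsupp1 _ (by simp; omega)
      rw [hzero, hl2z]
      norm_num
  · -- all further singular values vanish
    intro k hk
    by_cases hkn : k ≤ p + r
    · rw [hg k (by omega) hkn]
      exact monotone_eq_zero' hmono hgnn hsuppg ⟨p + r - k, by omega⟩ (by simp; omega)
    · rw [sigma, dif_neg (by omega)]
end

section
/- For integers n ≥ 2 and 1 ≤ m ≤ n², the minimum trace norm ψ_n(m) over all n×n (0,1)-matrices with exactly m ones satisfies ψ_n(m) ≤ √m + √⌈m/n⌉ / 2. -/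
open Matrix BigOperators

section Aux

lemma sum_ind_lt {R : Type*} [AddCommMonoidWithOne R] (n a : ℕ) (ha : a ≤ n) :
    ∑ i : Fin n, (if (i : ℕ) < a then (1:R) else 0) = a := by
  rw [Fin.sum_univ_eq_sum_range (fun i => if i < a then (1:R) else 0)]
  rw [← Finset.sum_subset (Finset.range_subset_range.2 ha) (by intro x _ hx; simp at hx ⊢; omega)]
  rw [show ∑ x ∈ Finset.range a, (if x < a then (1:R) else 0) = ∑ x ∈ Finset.range a, (1:R) from
    Finset.sum_congr rfl (fun x hx => by simp at hx; simp [hx])]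
  simp

lemma sum_ind_eq {R : Type*} [AddCommMonoidWithOne R] (n c : ℕ) :
    ∑ i : Fin n, (if (i : ℕ) = c then (1:R) else 0) = if c < n then 1 else 0 := by
  by_cases h : c < n
  · rw [show ∑ i : Fin n, (if (i:ℕ) = c then (1:R) else 0)
        = ∑ i : Fin n, (if i = ⟨c, h⟩ then (1:R) else 0) from
      Finset.sum_congr rfl (fun x _ => by simp [Fin.ext_iff])]
    simp [if_pos h]
  · rw [show ∑ i : Fin n, (if (i:ℕ) = c then (1:R) else 0) = ∑ _i : Fin n, (0:R) from
      Finset.sum_congr rfl (fun x _ => by rw [if_neg (by have := x.2; omega)]), if_neg h]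
    simp

lemma trace_eq_sum_eigs {N : ℕ} {M : Matrix (Fin N) (Fin N) ℂ} (hM : M.IsHermitian) :
    M.trace = ∑ i, (hM.eigenvalues i : ℂ) := by
  conv_lhs => rw [hM.spectral_theorem, Unitary.conjStarAlgAut_apply]
  rw [Matrix.trace_mul_comm, ← Matrix.mul_assoc, mul_eq_one_comm.mp
    ((Matrix.mem_unitaryGroup_iff).mp (hM.eigenvectorUnitary).2), one_mul, Matrix.trace_diagonal]
  rfl

lemma trace_sq_eq_sum_eigs {N : ℕ} {M : Matrix (Fin N) (Fin N) ℂ} (hM : M.IsHermitian) :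
    (M * M).trace = ∑ i, ((hM.eigenvalues i : ℂ))^2 := by
  have h1 : (star (hM.eigenvectorUnitary : Matrix (Fin N) (Fin N) ℂ))
      * (hM.eigenvectorUnitary : Matrix (Fin N) (Fin N) ℂ) = 1 :=
    mul_eq_one_comm.mp ((Matrix.mem_unitaryGroup_iff).mp (hM.eigenvectorUnitary).2)
  conv_lhs => rw [hM.spectral_theorem, Unitary.conjStarAlgAut_apply]
  set U : Matrix (Fin N) (Fin N) ℂ := (hM.eigenvectorUnitary : Matrix (Fin N) (Fin N) ℂ)
  set D : Matrix (Fin N) (Fin N) ℂ := diagonal (RCLike.ofReal ∘ hM.eigenvalues)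
  have h2 : U * D * star U * (U * D * star U) = U * (D * D) * star U := by
    simp only [Matrix.mul_assoc]
    rw [← Matrix.mul_assoc (star U) U, h1, one_mul]
  rw [h2, Matrix.trace_mul_comm, ← Matrix.mul_assoc, h1, one_mul]
  rw [show D * D = diagonal ((RCLike.ofReal ∘ hM.eigenvalues) * (RCLike.ofReal ∘ hM.eigenvalues))
    from Matrix.diagonal_mul_diagonal _ _, Matrix.trace_diagonal]
  simp [sq]

lemma key_ineq {N : ℕ} (lam : Fin N → ℝ) (h0 : ∀ i, 0 ≤ lam i)
    (hcard : (Finset.univ.filter fun i => lam i ≠ 0).card ≤ 2) :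
    ∑ i, Real.sqrt (lam i) ≤
      Real.sqrt ((∑ i, lam i) + 2 * Real.sqrt (((∑ i, lam i)^2 - ∑ i, (lam i)^2)/2)) := by
  classical
  set T := Finset.univ.filter fun i => lam i ≠ 0 with hT
  have e1 : ∑ i, Real.sqrt (lam i) = ∑ i ∈ T, Real.sqrt (lam i) := by
    rw [hT, Finset.sum_filter_of_ne]
    intro x _ hx
    intro h; exact hx (by rw [h, Real.sqrt_zero])
  have e2 : ∑ i, lam i = ∑ i ∈ T, lam i := by
    rw [hT, Finset.sum_filter_of_ne]; intro x _ hx h; exact hx h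
  have e3 : ∑ i, (lam i)^2 = ∑ i ∈ T, (lam i)^2 := by
    rw [hT, Finset.sum_filter_of_ne]; intro x _ hx h; exact hx (by rw [h]; ring)
  rw [e1, e2, e3]
  by_cases h2 : T.card = 2
  · obtain ⟨a, b, hab, hTab⟩ := Finset.card_eq_two.mp h2
    rw [hTab, Finset.sum_pair hab, Finset.sum_pair hab, Finset.sum_pair hab]
    rw [show ((lam a + lam b)^2 - (lam a^2 + lam b^2))/2 = lam a * lam b from by ring]
    rw [Real.sqrt_mul (h0 a)]
    have key : lam a + lam b + 2 * (Real.sqrt (lam a) * Real.sqrt (lam b))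
        = (Real.sqrt (lam a) + Real.sqrt (lam b))^2 := by
      rw [add_sq, Real.sq_sqrt (h0 a), Real.sq_sqrt (h0 b)]; ring
    rw [key, Real.sqrt_sq (by positivity)]
  · have h1 : T.card ≤ 1 := by omega
    rcases T.eq_empty_or_nonempty with hE | hNE
    · simp [hE]
    · obtain ⟨a, ha⟩ := Finset.card_eq_one.mp (le_antisymm h1 hNE.card_pos)
      rw [ha, Finset.sum_singleton, Finset.sum_singleton, Finset.sum_singleton]
      rw [show ((lam a)^2 - (lam a)^2)/2 = 0 from by ring, Real.sqrt_zero]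
      rw [mul_zero, add_zero]

noncomputable def Bmat (n q s : ℕ) : Matrix (Fin n) (Fin 2) ℂ :=
  Matrix.of fun i => ![if (i:ℕ) < q then 1 else 0, if (i:ℕ) < s then 1 else 0]

noncomputable def Cmat (n c : ℕ) : Matrix (Fin 2) (Fin n) ℂ :=
  Matrix.of (![fun j => if (j:ℕ) < c then 1 else 0, fun j => if (j:ℕ) = c then 1 else 0])

lemma Nmat_eq (n q s : ℕ) (hq : q ≤ n) (hs : s ≤ q) :
    (Bmat n q s)ᴴ * Bmat n q s = !![(q:ℂ), (s:ℂ); (s:ℂ), (s:ℂ)] := by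
  have key : ∀ (a b : ℕ), a ≤ n → b ≤ n → (a ≤ b ∨ b ≤ a) →
      ∑ i : Fin n, star (if (i:ℕ) < a then 1 else 0) * (if (i:ℕ) < b then 1 else 0)
      = ((min a b : ℕ) : ℂ) := by
    intro a b ha hb hab
    simp only [show ∀ i : Fin n, star (if (i:ℕ) < a then 1 else 0) * (if (i:ℕ) < b then 1 else 0)
        = (if (i:ℕ) < min a b then (1:ℂ) else 0) from fun i => by
      rcases Nat.lt_or_ge (i:ℕ) a with h1 | h1 <;> rcases Nat.lt_or_ge (i:ℕ) b with h2 | h2 <;>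
        simp [h1, h2, Nat.lt_min, not_lt_of_ge]]
    · exact sum_ind_lt n (min a b) (le_trans (min_le_left _ _) ha)
  ext k l
  fin_cases k <;> fin_cases l <;>
    simp only [Matrix.mul_apply, Matrix.conjTranspose_apply, Bmat, Matrix.of_apply,
      Matrix.cons_val_zero, Matrix.cons_val_one, Matrix.head_cons, Fin.mk_zero, Fin.mk_one,
      Matrix.cons_val', Matrix.empty_val', Matrix.cons_val_fin_one, Matrix.vecHead, Matrix.vecTail]
  · rw [key q q hq hq (Or.inl le_rfl)]; simp
  · rw [key q s hq (le_trans hs hq) (Or.inr hs)]; simp [Nat.min_eq_right hs]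
  · rw [key s q (le_trans hs hq) hq (Or.inl hs)]; simp [Nat.min_eq_left hs]
  · rw [key s s (le_trans hs hq) (le_trans hs hq) (Or.inl le_rfl)]; simp

lemma Dmat_eq (n c : ℕ) (hc : c ≤ n) :
    Cmat n c * (Cmat n c)ᴴ = !![(c:ℂ), 0; 0, if c < n then 1 else 0] := by
  ext k l
  fin_cases k <;> fin_cases l <;>
    simp only [Matrix.mul_apply, Matrix.conjTranspose_apply, Cmat, Matrix.of_apply,
      Matrix.cons_val_zero, Matrix.cons_val_one, Matrix.head_cons, Fin.mk_zero, Fin.mk_one,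
      Matrix.cons_val', Matrix.empty_val', Matrix.cons_val_fin_one, Matrix.vecHead, Matrix.vecTail]
  · simp only [show ∀ j : Fin n, (if (j:ℕ) < c then (1:ℂ) else 0) * star (if (j:ℕ) < c then 1 else 0)
        = (if (j:ℕ) < c then (1:ℂ) else 0) from fun j => by split <;> simp]
    rw [sum_ind_lt n c hc]; try simp
  · simp only [show ∀ j : Fin n, (if (j:ℕ) < c then (1:ℂ) else 0) * star (if (j:ℕ) = c then 1 else 0)
        = 0 from fun j => by
      by_cases h1 : (j:ℕ) < c <;> by_cases h2 : (j:ℕ) = c <;> simp [h1, h2] <;> omega]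
    try simp
  · simp only [show ∀ j : Fin n, (if (j:ℕ) = c then (1:ℂ) else 0) * star (if (j:ℕ) < c then 1 else 0)
        = 0 from fun j => by
      by_cases h1 : (j:ℕ) < c <;> by_cases h2 : (j:ℕ) = c <;> simp [h1, h2] <;> omega]
    try simp
  · simp only [show ∀ j : Fin n, (if (j:ℕ) = c then (1:ℂ) else 0) * star (if (j:ℕ) = c then 1 else 0)
        = (if (j:ℕ) = c then (1:ℂ) else 0) from fun j => by split <;> simp]
    rw [sum_ind_eq n c]; try simp

lemma Amat_apply (n q c s : ℕ) (i j : Fin n) :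
    (Bmat n q s * Cmat n c) i j
      = (if (i:ℕ) < q ∧ (j:ℕ) < c then 1 else 0) + (if (i:ℕ) < s ∧ (j:ℕ) = c then 1 else 0) := by
  simp only [Matrix.mul_apply, Fin.sum_univ_two, Bmat, Cmat, Matrix.of_apply,
    Matrix.cons_val_zero, Matrix.cons_val_one, Matrix.head_cons]
  rw [ite_zero_mul_ite_zero, ite_zero_mul_ite_zero, one_mul]

lemma Amat_entries (n q c s : ℕ) (i j : Fin n) :
    (Bmat n q s * Cmat n c) i j = 0 ∨ (Bmat n q s * Cmat n c) i j = 1 := by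
  rw [Amat_apply]
  by_cases h1 : (i:ℕ) < q ∧ (j:ℕ) < c <;> by_cases h2 : (i:ℕ) < s ∧ (j:ℕ) = c <;>
    simp [h1, h2] <;> omega

lemma Amat_count (n q c s : ℕ) (hq : q ≤ n) (hc : c ≤ n) (hs : s ≤ q)
    (hcs : s ≠ 0 → c < n) :
    (Finset.univ.filter fun p : Fin n × Fin n => (Bmat n q s * Cmat n c) p.1 p.2 = 1).card
      = q * c + s := by
  classical
  have hrw : ∀ i j : Fin n, (if (Bmat n q s * Cmat n c) i j = 1 then 1 else 0)
      = ((if (i:ℕ) < q then 1 else 0) * (if (j:ℕ) < c then 1 else 0)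
        + (if (i:ℕ) < s then 1 else 0) * (if (j:ℕ) = c then (1:ℕ) else 0)) := by
    intro i j
    rw [Amat_apply, ite_zero_mul_ite_zero, ite_zero_mul_ite_zero, one_mul]
    by_cases h2 : (i:ℕ) < s ∧ (j:ℕ) = c
    · obtain ⟨h2a, h2b⟩ := h2
      have h1 : ¬((i:ℕ) < q ∧ (j:ℕ) < c) := by omega
      simp [h1, h2a, h2b]
    · by_cases h1 : (i:ℕ) < q ∧ (j:ℕ) < c <;> simp [h1, h2]
  rw [Finset.card_filter, Fintype.sum_prod_type]
  simp only [hrw]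
  simp only [Finset.sum_add_distrib, ← Finset.mul_sum, ← Finset.sum_mul]
  rw [sum_ind_lt n q hq, sum_ind_lt n c hc, sum_ind_eq n c,
    sum_ind_lt n s (le_trans hs hq)]
  by_cases h : c < n
  · simp [h]
  · have hs0 : s = 0 := by by_contra h0; exact h (hcs h0)
    simp [h, hs0]

end Aux

set_option maxHeartbeats 1000000 in
/-- general upper bound on the minimum trace norm. -/
theorem stmt6 (n m : ℕ) (hn : 2 ≤ n) (hm1 : 1 ≤ m) (hm2 : m ≤ n ^ 2) :
    psi n m ≤ Real.sqrt m + Real.sqrt ((⌈(m : ℝ) / (n : ℝ)⌉₊ : ℝ)) / 2 := by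
  classical
  set q : ℕ := ⌈(m : ℝ) / (n : ℝ)⌉₊ with hqdef
  have hn0 : (0:ℝ) < n := by positivity
  have hq1 : 1 ≤ q := Nat.one_le_iff_ne_zero.mpr (by
    have : 0 < q := Nat.ceil_pos.mpr (by positivity)
    omega)
  have hmqn : m ≤ q * n := by
    have h := Nat.le_ceil ((m:ℝ)/(n:ℝ))
    rw [div_le_iff₀ hn0] at h
    exact_mod_cast h
  have hqn : q ≤ n := by
    apply Nat.ceil_le.mpr
    rw [div_le_iff₀ hn0]
    have : (m:ℝ) ≤ (n:ℝ)^2 := by exact_mod_cast hm2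
    nlinarith
  set c : ℕ := m / q with hcdef
  set s : ℕ := m % q with hsdef
  have hm : q * c + s = m := Nat.div_add_mod m q
  have hsq : s < q := Nat.mod_lt _ (by omega)
  have hqcm : q * c ≤ m := by omega
  have hc : c ≤ n := by
    by_contra h
    push_neg at h
    have h1 : q * n + q ≤ q * c := by
      have h2 := Nat.mul_le_mul_left q h
      rwa [Nat.mul_succ] at h2
    omega
  have hcs : s ≠ 0 → c < n := by
    intro h0
    rcases Nat.lt_or_ge c n with h | h
    · exact h
    · have hcn : c = n := le_antisymm hc h
      rw [hcn] at hm
      omega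
  set B : Matrix (Fin n) (Fin 2) ℂ := Bmat n q s with hBdef
  set C : Matrix (Fin 2) (Fin n) ℂ := Cmat n c with hCdef
  set A : Matrix (Fin n) (Fin n) ℂ := B * C with hAdef
  -- eigenvalues of AᴴA
  have hM : (Aᴴ * A).IsHermitian := Matrix.isHermitian_conjTranspose_mul_self A
  set lam : Fin n → ℝ := fun i => (Matrix.isHermitian_conjTranspose_mul_self A).eigenvalues i
    with hlam
  have h0 : ∀ i, 0 ≤ lam i := fun i => Matrix.eigenvalues_conjTranspose_mul_self_nonneg A i
  -- structural rewrites
  have hA1 : Aᴴ * A = Cᴴ * (Bᴴ * (B * C)) := by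
    rw [hAdef, Matrix.conjTranspose_mul]
    simp only [Matrix.mul_assoc]
  -- epsilon handling
  set ε : ℂ := if c < n then 1 else 0 with hεdef
  have hNval := Nmat_eq n q s hqn (le_of_lt hsq)
  have hDval := Dmat_eq n c hc
  have hsε : (s:ℂ) * ε = (s:ℂ) := by
    rw [hεdef]
    by_cases h : c < n
    · simp [h]
    · have hs0 : s = 0 := by by_contra h0; exact h (hcs h0)
      simp [h, hs0]
  -- trace computations
  have htr : (Aᴴ * A).trace = ((q * c + s : ℕ) : ℂ) := by
    rw [hA1, Matrix.trace_mul_comm]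
    rw [show (Bᴴ * (B * C)) * Cᴴ = (Bᴴ * B) * (C * Cᴴ) from by simp only [Matrix.mul_assoc]]
    rw [hBdef, hCdef, hNval, hDval, ← hεdef, Matrix.mul_fin_two, Matrix.trace_fin_two_of]
    push_cast
    linear_combination hsε
  have htr2 : ((Aᴴ * A) * (Aᴴ * A)).trace
      = ((q*q*(c*c) + 2*(s*s*c) + s*s : ℕ) : ℂ) := by
    have hA2 : (Aᴴ * A) * (Aᴴ * A) = Cᴴ * (Bᴴ * (B * (C * (Cᴴ * (Bᴴ * (B * C)))))) := by
      rw [hA1]; simp only [Matrix.mul_assoc]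
    rw [hA2, Matrix.trace_mul_comm]
    rw [show (Bᴴ * (B * (C * (Cᴴ * (Bᴴ * (B * C)))))) * Cᴴ
        = ((Bᴴ * B) * (C * Cᴴ)) * ((Bᴴ * B) * (C * Cᴴ)) from by simp only [Matrix.mul_assoc]]
    rw [hBdef, hCdef, hNval, hDval, ← hεdef, Matrix.mul_fin_two, Matrix.mul_fin_two,
      Matrix.trace_fin_two_of]
    push_cast
    linear_combination (2*(s:ℂ)*(c:ℂ) + (s:ℂ)*ε + (s:ℂ)) * hsε
  -- eigenvalue sums
  have hsum1 : ∑ i, (Matrix.isHermitian_conjTranspose_mul_self A).eigenvalues i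
      = ((q*c+s : ℕ) : ℝ) := by
    have h := trace_eq_sum_eigs (Matrix.isHermitian_conjTranspose_mul_self A)
    rw [htr] at h
    exact_mod_cast h.symm
  have hsum2 : ∑ i, ((Matrix.isHermitian_conjTranspose_mul_self A).eigenvalues i)^2
      = ((q*q*(c*c) + 2*(s*s*c) + s*s : ℕ) : ℝ) := by
    have h := trace_sq_eq_sum_eigs (Matrix.isHermitian_conjTranspose_mul_self A)
    rw [htr2] at h
    exact_mod_cast h.symm
  have hrank : (Finset.univ.filter
      fun i => (Matrix.isHermitian_conjTranspose_mul_self A).eigenvalues i ≠ 0).card ≤ 2 := by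
    have h1 : (Aᴴ * A).rank ≤ 2 := by
      rw [hA1]
      refine le_trans (Matrix.rank_mul_le_left _ _) (le_trans (Matrix.rank_le_card_width _) ?_)
      simp
    rw [(Matrix.isHermitian_conjTranspose_mul_self A).rank_eq_card_non_zero_eigs,
      Fintype.card_subtype] at h1
    exact h1
  have hkey := key_ineq _ (fun i => Matrix.eigenvalues_conjTranspose_mul_self_nonneg A i) hrank
  rw [hsum1, hsum2] at hkey
  -- membership and infimum
  have hcount : onesCount A = m := by
    have h := Amat_count n q c s hqn hc (le_of_lt hsq) hcs
    rw [hm] at h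
    unfold onesCount
    rw [hAdef, hBdef, hCdef]
    convert h using 2
  have hmem : traceNorm A ∈ {x | ∃ A' : Matrix (Fin n) (Fin n) ℂ,
      (∀ i j, A' i j = 0 ∨ A' i j = 1) ∧ onesCount A' = m ∧ traceNorm A' = x} :=
    ⟨A, fun i j => by rw [hAdef, hBdef, hCdef]; exact Amat_entries n q c s i j, hcount, rfl⟩
  have hbdd : BddBelow {x | ∃ A' : Matrix (Fin n) (Fin n) ℂ,
      (∀ i j, A' i j = 0 ∨ A' i j = 1) ∧ onesCount A' = m ∧ traceNorm A' = x} := by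
    refine ⟨0, ?_⟩
    rintro x ⟨A', -, -, rfl⟩
    exact Finset.sum_nonneg fun i _ => Real.sqrt_nonneg _
  have hpsi : psi n m ≤ traceNorm A := csInf_le hbdd hmem
  -- final arithmetic
  have hcr : (0:ℝ) ≤ (c:ℝ) := Nat.cast_nonneg c
  have hqr : (0:ℝ) ≤ (q:ℝ) := Nat.cast_nonneg q
  have hmr0 : (0:ℝ) ≤ (m:ℝ) := Nat.cast_nonneg m
  have hqcm' : (q:ℝ)*(c:ℝ) ≤ (m:ℝ) := by exact_mod_cast hqcm
  have hmr : (q:ℝ)*(c:ℝ) + (s:ℝ) = (m:ℝ) := by exact_mod_cast hm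
  have eY : ((((q*c+s : ℕ)):ℝ)^2 - ((q*q*(c*c) + 2*(s*s*c) + s*s : ℕ):ℝ))/2
      = (s:ℝ)*(c:ℝ)*((q:ℝ)-(s:ℝ)) := by push_cast; ring
  have eX : (((q*c+s : ℕ)):ℝ) = (m:ℝ) := by exact_mod_cast hm
  have h2E : 2 * Real.sqrt ((s:ℝ)*(c:ℝ)*((q:ℝ)-(s:ℝ))) ≤ Real.sqrt ((q:ℝ)*(m:ℝ)) := by
    have a1 : Real.sqrt ((s:ℝ)*(c:ℝ)*((q:ℝ)-(s:ℝ))) ≤ Real.sqrt (((q:ℝ)/2)^2*(c:ℝ)) :=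
      Real.sqrt_le_sqrt (by nlinarith [mul_nonneg hcr (sq_nonneg ((q:ℝ)-2*(s:ℝ)))])
    have a2 : Real.sqrt (((q:ℝ)/2)^2*(c:ℝ)) = (q:ℝ)/2 * Real.sqrt (c:ℝ) := by
      rw [Real.sqrt_mul (sq_nonneg _), Real.sqrt_sq (by positivity)]
    have a3 : (q:ℝ) * Real.sqrt (c:ℝ) = Real.sqrt ((q:ℝ)^2*(c:ℝ)) := by
      rw [Real.sqrt_mul (sq_nonneg _), Real.sqrt_sq hqr]
    calc 2 * Real.sqrt ((s:ℝ)*(c:ℝ)*((q:ℝ)-(s:ℝ)))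
        ≤ 2 * (((q:ℝ)/2) * Real.sqrt (c:ℝ)) := by
          rw [← a2]; exact mul_le_mul_of_nonneg_left a1 (by norm_num)
      _ = (q:ℝ) * Real.sqrt (c:ℝ) := by ring
      _ = Real.sqrt ((q:ℝ)^2*(c:ℝ)) := a3
      _ ≤ Real.sqrt ((q:ℝ)*(m:ℝ)) :=
          Real.sqrt_le_sqrt (by nlinarith [mul_le_mul_of_nonneg_left hqcm' hqr])
  calc psi n m ≤ traceNorm A := hpsi
    _ = ∑ i, Real.sqrt ((Matrix.isHermitian_conjTranspose_mul_self A).eigenvalues i) := by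
        unfold traceNorm singVals
        rfl
    _ ≤ Real.sqrt ((((q*c+s : ℕ)):ℝ) + 2 * Real.sqrt (((((q*c+s : ℕ)):ℝ)^2
          - ((q*q*(c*c) + 2*(s*s*c) + s*s : ℕ):ℝ))/2)) := hkey
    _ ≤ Real.sqrt m + Real.sqrt ((q:ℕ):ℝ) / 2 := by
        rw [eY, eX]
        have b1 : Real.sqrt ((q:ℝ)*(m:ℝ)) = Real.sqrt (q:ℝ) * Real.sqrt (m:ℝ) :=
          Real.sqrt_mul hqr _
        have b2 := Real.sq_sqrt hmr0
        have b3 := Real.sq_sqrt hqr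
        calc Real.sqrt ((m:ℝ) + 2 * Real.sqrt ((s:ℝ)*(c:ℝ)*((q:ℝ)-(s:ℝ))))
            ≤ Real.sqrt ((m:ℝ) + Real.sqrt ((q:ℝ)*(m:ℝ))) :=
              Real.sqrt_le_sqrt (by linarith)
          _ ≤ Real.sqrt ((Real.sqrt (m:ℝ) + Real.sqrt (q:ℝ) / 2)^2) :=
              Real.sqrt_le_sqrt (by
                nlinarith [Real.sqrt_nonneg (m:ℝ), Real.sqrt_nonneg (q:ℝ)])
          _ = Real.sqrt (m:ℝ) + Real.sqrt (q:ℝ) / 2 := Real.sqrt_sq (by positivity)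
end

section
/- A (0,1)-matrix A that contains neither [[1,0],[0,1]] nor [[0,1],[1,0]] as a (not necessarily contiguous) submatrix is, after deleting zero rows and columns and permuting rows and columns, a step matrix: a (0,1)-matrix whose entries satisfy a_{i,j} ≥ a_{k,l} whenever i ≤ k and j ≤ l. -/
open Matrix BigOperators

/-- a (0,1)-matrix with no 2×2 "identity" or "anti-identity"
submatrix can be turned, by permuting rows and columns, into a step matrix
(zero rows and columns then sit at the bottom/right). -/
theorem stmt13 (a b : ℕ) (A : Matrix (Fin a) (Fin b) ℝ)
    (h01 : ∀ i j, A i j = 0 ∨ A i j = 1)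
    (hno : ¬ ∃ f : Fin 2 → Fin a, ∃ g : Fin 2 → Fin b, StrictMono f ∧ StrictMono g ∧
      (A.submatrix f g = !![1, 0; 0, 1] ∨ A.submatrix f g = !![0, 1; 1, 0])) :
    ∃ σ : Equiv.Perm (Fin a), ∃ τ : Equiv.Perm (Fin b),
      ∀ i k : Fin a, ∀ j l : Fin b, i ≤ k → j ≤ l →
        A (σ k) (τ l) ≤ A (σ i) (τ j) := by

  classical
  -- Key lemma: forbidden configuration
  have sm : ∀ {n : ℕ} (x y : Fin n), x < y → StrictMono ![x, y] := by
    intro n x y hxy u v huv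
    have h2u := u.isLt
    have h2v := v.isLt
    rw [Fin.lt_def] at huv
    have hu : u = 0 := by apply Fin.ext; show u.val = 0; omega
    have hv : v = 1 := by apply Fin.ext; show v.val = 1; omega
    subst hu; subst hv
    simpa using hxy
  have hkey : ∀ (i k : Fin a) (j l : Fin b), A i j = 1 → A k l = 1 → A i l = 0 →
      A k j = 0 → i ≠ k → j ≠ l → False := by
    intro i k j l h1 h2 h3 h4 hik hjl
    apply hno
    rcases lt_or_gt_of_ne hik with hik | hik <;> rcases lt_or_gt_of_ne hjl with hjl | hjl
    · exact ⟨![i, k], ![j, l], sm _ _ hik, sm _ _ hjl, Or.inl (by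
        ext x y; fin_cases x <;> fin_cases y <;> simp [h1, h2, h3, h4])⟩
    · exact ⟨![i, k], ![l, j], sm _ _ hik, sm _ _ hjl, Or.inr (by
        ext x y; fin_cases x <;> fin_cases y <;> simp [h1, h2, h3, h4])⟩
    · exact ⟨![k, i], ![j, l], sm _ _ hik, sm _ _ hjl, Or.inr (by
        ext x y; fin_cases x <;> fin_cases y <;> simp [h1, h2, h3, h4])⟩
    · exact ⟨![k, i], ![l, j], sm _ _ hik, sm _ _ hjl, Or.inl (by
        ext x y; fin_cases x <;> fin_cases y <;> simp [h1, h2, h3, h4])⟩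
  set R : Fin a → Finset (Fin b) := fun i => Finset.univ.filter (fun j => A i j = 1) with hR
  set C : Fin b → Finset (Fin a) := fun j => Finset.univ.filter (fun i => A i j = 1) with hC
  have hmemR : ∀ i j, j ∈ R i ↔ A i j = 1 := by intro i j; simp [hR]
  have hmemC : ∀ i j, i ∈ C j ↔ A i j = 1 := by intro i j; simp [hC]
  have hzero : ∀ i j, A i j ≠ 1 → A i j = 0 := by
    intro i j h; rcases h01 i j with h' | h' <;> tauto
  have hRchain : ∀ i k, R i ⊆ R k ∨ R k ⊆ R i := by
    intro i k
    by_contra hcon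
    push_neg at hcon
    obtain ⟨h1, h2⟩ := hcon
    obtain ⟨j, hj1, hj2⟩ := Finset.not_subset.mp h1
    obtain ⟨l, hl1, hl2⟩ := Finset.not_subset.mp h2
    have hik : i ≠ k := by rintro rfl; exact hj2 hj1
    have hjl : j ≠ l := by rintro rfl; exact hl2 hj1
    exact hkey i k j l ((hmemR i j).mp hj1) ((hmemR k l).mp hl1)
      (hzero _ _ (fun h => hl2 ((hmemR i l).mpr h)))
      (hzero _ _ (fun h => hj2 ((hmemR k j).mpr h))) hik hjl
  have hCchain : ∀ j l, C j ⊆ C l ∨ C l ⊆ C j := by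
    intro j l
    by_contra hcon
    push_neg at hcon
    obtain ⟨h1, h2⟩ := hcon
    obtain ⟨i, hi1, hi2⟩ := Finset.not_subset.mp h1
    obtain ⟨k, hk1, hk2⟩ := Finset.not_subset.mp h2
    have hik : i ≠ k := by rintro rfl; exact hi2 hk1
    have hjl : j ≠ l := by rintro rfl; exact hi2 hi1
    exact hkey i k j l ((hmemC i j).mp hi1) ((hmemC k l).mp hk1)
      (hzero _ _ (fun h => hi2 ((hmemC i l).mpr h)))
      (hzero _ _ (fun h => hk2 ((hmemC k j).mpr h))) hik hjl
  set σ : Equiv.Perm (Fin a) := Tuple.sort (fun i => -((R i).card : ℤ)) with hσ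
  set τ : Equiv.Perm (Fin b) := Tuple.sort (fun j => -((C j).card : ℤ)) with hτ
  have hσmono : ∀ i k : Fin a, i ≤ k → (R (σ k)).card ≤ (R (σ i)).card := by
    intro i k hik
    have := Tuple.monotone_sort (fun i => -((R i).card : ℤ)) hik
    simpa using this
  have hτmono : ∀ j l : Fin b, j ≤ l → (C (τ l)).card ≤ (C (τ j)).card := by
    intro j l hjl
    have := Tuple.monotone_sort (fun j => -((C j).card : ℤ)) hjl
    simpa using this
  have hRsub : ∀ i k : Fin a, i ≤ k → R (σ k) ⊆ R (σ i) := by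
    intro i k hik
    rcases hRchain (σ k) (σ i) with h | h
    · exact h
    · exact (Finset.eq_of_subset_of_card_le h (hσmono i k hik)).ge
  have hCsub : ∀ j l : Fin b, j ≤ l → C (τ l) ⊆ C (τ j) := by
    intro j l hjl
    rcases hCchain (τ l) (τ j) with h | h
    · exact h
    · exact (Finset.eq_of_subset_of_card_le h (hτmono j l hjl)).ge
  refine ⟨σ, τ, fun i k j l hik hjl => ?_⟩
  rcases h01 (σ k) (τ l) with h | h
  · rw [h]
    rcases h01 (σ i) (τ j) with h' | h' <;> rw [h'] <;> norm_num
  · have h1 : τ l ∈ R (σ k) := (hmemR _ _).mpr h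
    have h2 : A (σ i) (τ l) = 1 := (hmemR _ _).mp (hRsub i k hik h1)
    have h3 : σ i ∈ C (τ l) := (hmemC _ _).mpr h2
    have h4 : A (σ i) (τ j) = 1 := (hmemC _ _).mp (hCsub j l hjl h3)
    rw [h, h4]
end

section
/- If n ≥ 4 and 2n < m ≤ 3n, then m = ab for some integers 2 ≤ a ≤ n and 2 ≤ b ≤ n if and only if m is neither a prime nor twice a prime. -/
open Matrix BigOperators

theorem stmt16 (n m : ℕ) (hn : 4 ≤ n) (h1 : 2 * n < m) (h2 : m ≤ 3 * n) :
    (∃ a b : ℕ, 2 ≤ a ∧ a ≤ n ∧ 2 ≤ b ∧ b ≤ n ∧ m = a * b) ↔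
      ¬ (m.Prime ∨ ∃ p : ℕ, p.Prime ∧ m = 2 * p) := by
  constructor
  · rintro ⟨a, b, ha2, han, hb2, hbn, hab⟩
    rintro (hp | ⟨p, hp, hm⟩)
    · rcases hp.eq_one_or_self_of_dvd a ⟨b, hab⟩ with h | h
      · omega
      · nlinarith
    · -- m = 2 * p, p prime, p > n
      have hpn : n < p := by omega
      have hdvd : p ∣ a * b := ⟨2, by omega⟩
      rcases (Nat.Prime.dvd_mul hp).mp hdvd with h | h
      · have := Nat.le_of_dvd (by omega) h; omega
      · have := Nat.le_of_dvd (by omega) h; omega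
  · intro h
    push_neg at h
    obtain ⟨hnp, h2p⟩ := h
    rcases Nat.even_or_odd m with he | ho
    · -- m even: m = 2k, k > n, k composite
      obtain ⟨k, hk⟩ := he
      have hk2 : m = 2 * k := by omega
      have hkn : n < k := by omega
      have hknp : ¬ k.Prime := fun hkp => h2p k hkp hk2
      have hk1 : k ≠ 1 := by omega
      set q := k.minFac with hq
      have hqp : q.Prime := Nat.minFac_prime hk1
      have hq2 : 2 ≤ q := hqp.two_le
      have hqsq : q ^ 2 ≤ k := Nat.minFac_sq_le_self (by omega) hknp
      obtain ⟨b, hb⟩ := Nat.minFac_dvd k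
      rw [← hq] at hb
      have hb2 : 2 ≤ b := by
        rcases Nat.lt_or_ge b 2 with hb' | hb'
        · interval_cases b
          · omega
          · exfalso; apply hknp; rw [hb, mul_one]; exact hqp
        · exact hb'
      have hbq : q ≤ b := by nlinarith [hqsq, hb]
      refine ⟨2 * q, b, by omega, ?_, hb2, ?_, by rw [hk2, hb]; ring⟩
      · -- 2q ≤ n
        by_contra hqn
        push_neg at hqn
        have : 2 * q ^ 2 ≤ 3 * n := by nlinarith
        nlinarith
      · -- b ≤ n : 2b ≤ qb = k ≤ 3n/2 ≤ 2n
        have h2bk : 2 * b ≤ k := hb ▸ Nat.mul_le_mul_right b hq2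
        omega
    · -- m odd: p = minFac m ≥ 3
      have hm1 : m ≠ 1 := by omega
      set p := m.minFac with hp
      have hpp : p.Prime := Nat.minFac_prime hm1
      have hp2 : 2 ≤ p := hpp.two_le
      obtain ⟨c, hc⟩ := ho
      have hpne2 : p ≠ 2 := by
        intro h2
        have : (2 : ℕ) ∣ m := h2 ▸ Nat.minFac_dvd m
        omega
      have hp3 : 3 ≤ p := by
        rcases hpp.eq_one_or_self_of_dvd 2 with _
        omega
      have hpsq : p ^ 2 ≤ m := Nat.minFac_sq_le_self (by omega) hnp
      obtain ⟨b, hb⟩ := Nat.minFac_dvd m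
      rw [← hp] at hb
      have hb2 : 2 ≤ b := by
        rcases Nat.lt_or_ge b 2 with hb' | hb'
        · interval_cases b
          · omega
          · exfalso; apply hnp; rw [hb, mul_one]; exact hpp
        · exact hb'
      have hbp : p ≤ b := by nlinarith
      refine ⟨p, b, hp2, ?_, hb2, ?_, hb⟩
      · by_contra hpn
        push_neg at hpn
        nlinarith
      · have : 3 * b ≤ p * b := Nat.mul_le_mul_right b hp3
        omega
end
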